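/- arXiv:2109.04923 — 9 statements merged into one kernel-verified Lean document; each statement's English description precedes it below -/
import Mathlib

section
/- The map F : M × M → M × M defined by F(x,y) = (x^{q+1} + B·y^{q+1}, x^{r}·y + (a/B)·x·y^{r}) is planar; that is, for every (u,v) ∈ M × M with (u,v) ≠ (0,0), the only (x,y) ∈ M × M satisfying F(x+u, y+v) − F(x,y) − F(u,v) = (0,0) is (x,y) = (0,0). -/
/-!
Write `q = p^k`, `Q = p^(m/2)` and `τ z = z^Q`: an involutive automorphism of `M` whose fixed
field `𝔽_Q` consists of squares of `M`. Polarizing `F` gives, with `S(u,x) = u x^q + u^q x`,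
`S(u,x) + B S(v,y) = 0` and `B (v x^r + u^r y) + a (x v^r + u y^r) = 0`.
Combining the second equation with its `τ`-image shows that `B δ^(q+1)` is `τ`-fixed for
`δ = u^Q y - v x^Q`; since `B` is a non-square and `δ^(q+1)` a square, `δ = 0`.
Substituting `δ = 0` into the first equation gives `B v^(q+1) S^(Q+1) = -u^(Q(q+1)) S^2` for
`S = S(u,x)`, which forces `S(u,x) = 0` and hence `S(v,y) = 0`. Finally `z ↦ z + z^q` is
injective because `q^(m/e) = (p^m)^(k/e)` with `m/e` odd, so `S(c,w) = 0` with `c ≠ 0` forces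
`w = 0`, and `δ = 0` yields the remaining coordinate.
-/

/-- The planar map of family `S`:
`F(x,y) = (x^{q+1} + B·y^{q+1}, x^r·y + A·x·y^r)` where `A = a/B`. -/
noncomputable def familySF (K : Type) [Field K] (q r : ℕ) (B A : K) (x y : K) : K × K :=
  (x ^ (q + 1) + B * y ^ (q + 1), x ^ r * y + A * (x * y ^ r))

theorem eq_zero_of_add_pow_eq_zero {K : Type*} [Field K] (h2 : (2 : K) ≠ 0) {q n : ℕ}
    (hq : Odd q) (hn : Odd n) (hfix : ∀ z : K, z ^ q ^ n = z) {z : K} (h : z + z ^ q = 0) :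
    z = 0 := by
  have hzq : z ^ q = -z := eq_neg_of_add_eq_zero_right h
  have hiter : ∀ j : ℕ, z ^ q ^ j = (-1) ^ j * z := by
    intro j
    induction j with
    | zero => simp
    | succ j ih =>
      rw [pow_succ, pow_mul, ih, mul_pow, ← pow_mul, mul_comm j q, pow_mul, hq.neg_one_pow,
        hzq, pow_succ]
      ring
  have hz : z = -z := by
    conv_lhs => rw [← hfix z, hiter, hn.neg_one_pow]
    ring
  exact (mul_eq_zero.mp (by linear_combination hz : (2 : K) * z = 0)).resolve_left h2

theorem FiniteField.isSquare_of_pow_eq_self {K : Type*} [Field K] [Fintype K] {Q : ℕ}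
    (hQ : Odd Q) (hcard : Fintype.card K = Q ^ 2) {z : K} (hz : z ^ Q = z) : IsSquare z := by
  rcases eq_or_ne z 0 with rfl | hz0
  · exact IsSquare.zero
  obtain ⟨s, rfl⟩ := hQ
  have hchar : ringChar K ≠ 2 := by
    rw [Ne, FiniteField.even_card_iff_char_two, hcard, ← Nat.even_iff, Nat.not_even_iff_odd]
    exact Odd.pow ⟨s, rfl⟩
  have hcard2 : Fintype.card K / 2 = 2 * s * (s + 1) := by
    rw [hcard, show (2 * s + 1) ^ 2 = 2 * (2 * s * (s + 1)) + 1 by ring]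
    omega
  have hz1 : z ^ (2 * s) = 1 := by
    refine mul_right_cancel₀ hz0 ?_
    rw [← pow_succ, hz, one_mul]
  rw [FiniteField.isSquare_iff hchar hz0, hcard2, pow_mul, hz1, one_pow]

def powPolar {R : Type*} [CommSemiring R] (n : ℕ) (u x : R) : R := u * x ^ n + u ^ n * x

theorem eq_zero_of_powPolar_eq_zero {K : Type*} [Field K] {q : ℕ}
    (hker : ∀ z : K, z + z ^ q = 0 → z = 0) {c w : K} (hc : c ≠ 0) (h : powPolar q c w = 0) :
    w = 0 := by
  have hdiv : w / c + (w / c) ^ q = powPolar q c w / c ^ (q + 1) := by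
    rw [powPolar, div_pow]; field_simp; ring
  simpa [hc] using hker (w / c) (by rw [hdiv, h, zero_div])

theorem isSquare_of_mul_eq {G : Type*} [CommGroupWithZero G] {B s t : G} (hs : IsSquare s)
    (hs0 : s ≠ 0) (ht : IsSquare t) (h : B * s = t) : IsSquare B := by
  rw [eq_div_of_mul_eq hs0 h]
  exact ht.div hs

section Frobenius

variable {K : Type*} [Field K] {p : ℕ} [ExpChar K p]

theorem powPolar_pow_expChar_pow (k n : ℕ) (u x : K) :
    powPolar (p ^ k) u x ^ p ^ n = powPolar (p ^ k) (u ^ p ^ n) (x ^ p ^ n) := by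
  simp only [powPolar, add_pow_expChar_pow, mul_pow, ← pow_mul, mul_comm (p ^ k)]

variable {k n : ℕ} {a B u v x y : K}

theorem frobenius_fixed_of_polar_eq_zero (hτ : ∀ z : K, (z ^ p ^ n) ^ p ^ n = z) (ha0 : a ≠ 0)
    (haQ : a ^ p ^ n = a)
    (h1 : powPolar (p ^ k) u x + B * powPolar (p ^ k) v y = 0)
    (h2 : B * (v * (x ^ p ^ n) ^ p ^ k + (u ^ p ^ n) ^ p ^ k * y)
      + a * (x * (v ^ p ^ n) ^ p ^ k + u * (y ^ p ^ n) ^ p ^ k) = 0) :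
    (B * (u ^ p ^ n * y - v * x ^ p ^ n) ^ (p ^ k + 1)) ^ p ^ n
      = B * (u ^ p ^ n * y - v * x ^ p ^ n) ^ (p ^ k + 1) := by
  have hτq (z : K) : ((z ^ p ^ n) ^ p ^ k) ^ p ^ n = z ^ p ^ k := by
    rw [pow_right_comm, hτ]
  have h1τ := congrArg (· ^ p ^ n) h1
  simp only [add_pow_expChar_pow, mul_pow, powPolar_pow_expChar_pow, zero_pow
    (expChar_pow_pos K p n).ne'] at h1τ
  have h2τ := congrArg (· ^ p ^ n) h2
  simp only [add_pow_expChar_pow, mul_pow, haQ, hτq, zero_pow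
    (expChar_pow_pos K p n).ne'] at h2τ
  have hδτ : (u ^ p ^ n * y - v * x ^ p ^ n) ^ p ^ n = u * y ^ p ^ n - v ^ p ^ n * x := by
    rw [sub_pow_expChar_pow, mul_pow, mul_pow, hτ, hτ]
  rw [mul_pow, ← pow_mul, mul_comm (p ^ k + 1), pow_mul, hδτ, pow_succ, pow_succ,
    sub_pow_expChar_pow, sub_pow_expChar_pow, mul_pow, mul_pow, mul_pow, mul_pow]
  refine mul_left_cancel₀ ha0 ?_
  -- With `δ = u^Q y - v x^Q`, `S = powPolar q` and `r = qQ`, the ring identity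
  -- `(x^Q v^q + u^Q y^q)(v x^r + u^r y) = S(v,y) S(u^Q,x^Q) + δ δ^q` and its `τ`-image
  -- reduce the claim to this combination of `h1`, `h2` and their `τ`-images.
  simp only [powPolar] at h1 h1τ
  linear_combination (B ^ p ^ n * (v ^ p ^ n * x ^ p ^ k + u ^ p ^ k * y ^ p ^ n)) * h2
    - (B * (v * (x ^ p ^ n) ^ p ^ k + (u ^ p ^ n) ^ p ^ k * y)) * h2τ
    - (a * B ^ p ^ n * (v ^ p ^ n * (y ^ p ^ n) ^ p ^ k + (v ^ p ^ n) ^ p ^ k * y ^ p ^ n)) * h1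
    + (a * B * (v * y ^ p ^ k + v ^ p ^ k * y)) * h1τ

theorem pow_mul_eq_mul_pow_of_polar_eq_zero (hp : Odd p) (hτ : ∀ z : K, (z ^ p ^ n) ^ p ^ n = z)
    (hsq : ∀ z : K, z ^ p ^ n = z → IsSquare z) (hB : ¬IsSquare B) (ha0 : a ≠ 0)
    (haQ : a ^ p ^ n = a) (h1 : powPolar (p ^ k) u x + B * powPolar (p ^ k) v y = 0)
    (h2 : B * (v * (x ^ p ^ n) ^ p ^ k + (u ^ p ^ n) ^ p ^ k * y)
      + a * (x * (v ^ p ^ n) ^ p ^ k + u * (y ^ p ^ n) ^ p ^ k) = 0) :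
    u ^ p ^ n * y = v * x ^ p ^ n := by
  by_contra hδ
  have hδ0 := sub_ne_zero.mpr hδ
  exact hB (isSquare_of_mul_eq (hp.pow.add_one.isSquare_pow _) (pow_ne_zero _ hδ0)
    (hsq _ (frobenius_fixed_of_polar_eq_zero hτ ha0 haQ h1 h2)) rfl)

theorem powPolar_eq_zero_of_pow_mul_eq_mul_pow (hp : Odd p) (hneg : IsSquare (-1 : K))
    (hB : ¬IsSquare B) (hδ : u ^ p ^ n * y = v * x ^ p ^ n)
    (h1 : powPolar (p ^ k) u x + B * powPolar (p ^ k) v y = 0) :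
    powPolar (p ^ k) u x = 0 := by
  by_contra hS
  have hv : v ≠ 0 := by
    rintro rfl
    exact hS (by simpa [powPolar, zero_pow (expChar_pow_pos K p k).ne'] using h1)
  have hδq : (u ^ p ^ n) ^ p ^ k * y ^ p ^ k = v ^ p ^ k * (x ^ p ^ n) ^ p ^ k := by
    rw [← mul_pow, hδ, mul_pow]
  have hTS : (u ^ p ^ n) ^ (p ^ k + 1) * powPolar (p ^ k) v y
      = v ^ (p ^ k + 1) * powPolar (p ^ k) (u ^ p ^ n) (x ^ p ^ n) := by
    unfold powPolar
    linear_combination (v * u ^ p ^ n) * hδq + (v ^ p ^ k * (u ^ p ^ n) ^ p ^ k) * hδ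
  have hB_eq : B * (v ^ (p ^ k + 1) * powPolar (p ^ k) u x ^ (p ^ n + 1))
      = -1 * ((u ^ p ^ n) ^ (p ^ k + 1) * powPolar (p ^ k) u x ^ 2) := by
    rw [pow_succ _ (p ^ n), powPolar_pow_expChar_pow]
    linear_combination ((u ^ p ^ n) ^ (p ^ k + 1) * powPolar (p ^ k) u x) * h1
      - (B * powPolar (p ^ k) u x) * hTS
  exact hB (isSquare_of_mul_eq ((hp.pow.add_one.isSquare_pow v).mul
      (hp.pow.add_one.isSquare_pow _)) (mul_ne_zero (pow_ne_zero _ hv) (pow_ne_zero _ hS))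
    (hneg.mul ((hp.pow.add_one.isSquare_pow _).mul (even_two.isSquare_pow _))) hB_eq)

theorem eq_zero_of_polar_eq_zero (hp : Odd p) (hτ : ∀ z : K, (z ^ p ^ n) ^ p ^ n = z)
    (hsq : ∀ z : K, z ^ p ^ n = z → IsSquare z) (hker : ∀ z : K, z + z ^ p ^ k = 0 → z = 0)
    (hB : ¬IsSquare B) (ha0 : a ≠ 0) (haQ : a ^ p ^ n = a) (huv : (u, v) ≠ (0, 0))
    (h1 : powPolar (p ^ k) u x + B * powPolar (p ^ k) v y = 0)
    (h2 : B * (v * (x ^ p ^ n) ^ p ^ k + (u ^ p ^ n) ^ p ^ k * y)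
      + a * (x * (v ^ p ^ n) ^ p ^ k + u * (y ^ p ^ n) ^ p ^ k) = 0) :
    x = 0 ∧ y = 0 := by
  have hδ := pow_mul_eq_mul_pow_of_polar_eq_zero hp hτ hsq hB ha0 haQ h1 h2
  have hS := powPolar_eq_zero_of_pow_mul_eq_mul_pow hp (hsq _ (neg_one_pow_expChar_pow K p n))
    hB hδ h1
  have hB0 : B ≠ 0 := by rintro rfl; exact hB IsSquare.zero
  have hT : powPolar (p ^ k) v y = 0 := by
    simpa [hS, hB0] using h1
  have hQ0 : p ^ n ≠ 0 := (expChar_pow_pos K p n).ne'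
  by_cases hu : u = 0
  · subst hu
    have hv : v ≠ 0 := by rintro rfl; exact huv rfl
    rw [zero_pow hQ0, zero_mul, eq_comm, mul_eq_zero] at hδ
    exact ⟨eq_zero_of_pow_eq_zero (hδ.resolve_left hv), eq_zero_of_powPolar_eq_zero hker hv hT⟩
  · have hx := eq_zero_of_powPolar_eq_zero hker hu hS
    rw [hx, zero_pow hQ0, mul_zero, mul_eq_zero] at hδ
    exact ⟨hx, hδ.resolve_left (pow_ne_zero _ hu)⟩

end Frobenius

theorem familySF_add_sub_sub {K : Type} [Field K] {p : ℕ} [ExpChar K p] (k l : ℕ)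
    (B A x y u v : K) :
    familySF K (p ^ k) (p ^ l) B A (x + u) (y + v) - familySF K (p ^ k) (p ^ l) B A x y
        - familySF K (p ^ k) (p ^ l) B A u v =
      (powPolar (p ^ k) u x + B * powPolar (p ^ k) v y,
        v * x ^ p ^ l + u ^ p ^ l * y + A * (x * v ^ p ^ l + u * y ^ p ^ l)) := by
  simp only [familySF, powPolar, Prod.mk_sub_mk, pow_succ, add_pow_expChar_pow]
  ext <;> ring

theorem stmt_0_general (p m k : ℕ) (hp : Nat.Prime p) (hp2 : p ≠ 2)
    (hm : Even m)
    (K : Type) [Field K] [Fintype K] (hcard : Fintype.card K = p ^ m)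
    (hodd : Odd (m / Nat.gcd k m))
    (a B : K) (ha0 : a ≠ 0) (haQ : a ^ p ^ (m / 2) = a)
    (hB0 : B ≠ 0) (hB : ¬ ∃ c : K, c ^ 2 = B) :
    ∀ u v : K, (u, v) ≠ ((0 : K), (0 : K)) →
      ∀ x y : K,
        familySF K (p ^ k) (p ^ (k + m / 2)) B (a / B) (x + u) (y + v)
            - familySF K (p ^ k) (p ^ (k + m / 2)) B (a / B) x y
            - familySF K (p ^ k) (p ^ (k + m / 2)) B (a / B) u v = (0, 0) →
          (x, y) = ((0 : K), (0 : K)) := by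
  have := Fact.mk hp
  have := charP_of_card_eq_prime_pow hcard
  have hpodd : Odd p := hp.odd_of_ne_two hp2
  have hcardQ : Fintype.card K = (p ^ (m / 2)) ^ 2 := by
    rw [hcard, ← pow_mul, Nat.div_mul_cancel (even_iff_two_dvd.mp hm)]
  have hτ (z : K) : (z ^ p ^ (m / 2)) ^ p ^ (m / 2) = z := by
    rw [← pow_mul, ← sq, ← hcardQ, FiniteField.pow_card]
  have hfix (z : K) : z ^ (p ^ k) ^ (m / Nat.gcd k m) = z := by
    rw [← pow_mul, ← Nat.mul_div_assoc _ (Nat.gcd_dvd_right k m), mul_comm,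
      Nat.mul_div_assoc _ (Nat.gcd_dvd_left k m), pow_mul, ← hcard, FiniteField.pow_card_pow]
  have hker : ∀ z : K, z + z ^ p ^ k = 0 → z = 0 := fun _ ↦
    eq_zero_of_add_pow_eq_zero (Ring.two_ne_zero (by rwa [ringChar.eq K p])) hpodd.pow hodd hfix
  intro u v huv x y h
  have hr (z : K) : z ^ p ^ (k + m / 2) = (z ^ p ^ (m / 2)) ^ p ^ k := by
    rw [← pow_mul, ← pow_add, add_comm]
  rw [familySF_add_sub_sub, Prod.mk.injEq] at h
  obtain ⟨h1, h2⟩ := h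
  simp only [hr] at h2
  rw [Prod.mk.injEq]
  refine eq_zero_of_polar_eq_zero hpodd hτ
    (fun _ ↦ FiniteField.isSquare_of_pow_eq_self hpodd.pow hcardQ) hker
    (fun ⟨c, hc⟩ ↦ hB ⟨c, by rw [hc, sq]⟩) ha0 haQ huv h1 ?_
  linear_combination B * h2 - (x * (v ^ p ^ (m / 2)) ^ p ^ k + u * (y ^ p ^ (m / 2)) ^ p ^ k)
    * mul_div_cancel₀ a hB0

/-- The map `F(x,y) = (x^{q+1} + B y^{q+1}, x^r y + (a/B) x y^r)` with `q = p^k`,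
`r = p^{k+m/2}` is planar: for every `(u,v) ≠ (0,0)` the only solution of
`F(x+u,y+v) - F(x,y) - F(u,v) = (0,0)` is `(x,y) = (0,0)`. -/
theorem stmt_0 (p m k : ℕ) (hp : Nat.Prime p) (hp2 : p ≠ 2)
    (hm : Even m) (hm0 : 0 < m)
    (K : Type) [Field K] [Fintype K] (hcard : Fintype.card K = p ^ m)
    (hk1 : 1 ≤ k) (hk2 : k ≤ m - 1)
    (hodd : Odd (m / Nat.gcd k m))
    (a B : K) (ha0 : a ≠ 0) (haQ : a ^ p ^ (m / 2) = a)
    (hB0 : B ≠ 0) (hB : ¬ ∃ c : K, c ^ 2 = B) :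
    ∀ u v : K, (u, v) ≠ ((0 : K), (0 : K)) →
      ∀ x y : K,
        familySF K (p ^ k) (p ^ (k + m / 2)) B (a / B) (x + u) (y + v)
            - familySF K (p ^ k) (p ^ (k + m / 2)) B (a / B) x y
            - familySF K (p ^ k) (p ^ (k + m / 2)) B (a / B) u v = (0, 0) →
          (x, y) = ((0 : K), (0 : K)) :=
  stmt_0_general p m k hp hp2 hm K hcard hodd a B ha0 haQ hB0 hB
end

section
/- No element x ∈ M^× satisfies x^{q−1} = −1; that is, −1 is not a (q−1)-st power in M^×. -/
/-- `-1` is not a `(q-1)`-st power in `M^×`, where `q = p^k`, `M = 𝔽_{p^m}`,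
`m` even, and `m / gcd(k,m)` odd. -/
theorem stmt_2 (p m k : ℕ) (hp : Nat.Prime p) (hp2 : p ≠ 2)
    (hm : Even m) (hm0 : 0 < m)
    (K : Type) [Field K] [Fintype K] (hcard : Fintype.card K = p ^ m)
    (hk1 : 1 ≤ k) (hk2 : k ≤ m - 1)
    (hodd : Odd (m / Nat.gcd k m)) :
    ¬ ∃ x : K, x ≠ 0 ∧ x ^ (p ^ k - 1) = -1 := by
  rintro ⟨x, hx0, hx⟩
  set e := Nat.gcd k m with he
  have hem : e ∣ m := Nat.gcd_dvd_right k m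
  have hek : e ∣ k := Nat.gcd_dvd_left k m
  have he0 : 0 < e := Nat.gcd_pos_of_pos_right k hm0
  set a := p ^ e with ha
  have hp1 : 1 < p := hp.one_lt
  have hpodd : Odd p := hp.odd_of_ne_two hp2
  have ha1 : 1 < a := Nat.one_lt_pow he0.ne' hp1
  set n := m / e with hn
  have hpm : p ^ m = a ^ n := by
    rw [ha, ← pow_mul, Nat.mul_div_cancel' hem]
  have hpk : p ^ k = a ^ (k / e) := by
    rw [ha, ← pow_mul, Nat.mul_div_cancel' hek]
  set N := ∑ i ∈ Finset.range n, a ^ i with hN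
  have hNmul : (a - 1) * N = a ^ n - 1 := by
    have h := geom_sum_mul (a : ℤ) n
    have h1 : (1 : ℕ) ≤ a := ha1.le
    have h2 : (1 : ℕ) ≤ a ^ n := Nat.one_le_pow _ _ (by omega)
    have hNc : (N : ℤ) = ∑ i ∈ Finset.range n, (a : ℤ) ^ i := by
      rw [hN]; push_cast; rfl
    zify [h1, h2]
    rw [hNc]
    linarith
  -- N is odd
  have hNodd : Odd N := by
    have haodd : Odd a := hpodd.pow
    have : N % 2 = n % 2 := by
      rw [hN]
      rw [Finset.sum_nat_mod]
      have : ∀ i ∈ Finset.range n, a ^ i % 2 = 1 := by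
        intro i _
        exact Nat.odd_iff.mp haodd.pow
      rw [Finset.sum_congr rfl this]
      simp [Nat.odd_iff]
    rw [Nat.odd_iff, this, ← Nat.odd_iff]
    exact hodd
  -- divisibility
  obtain ⟨t, ht⟩ : (a - 1) ∣ p ^ k - 1 := by
    rw [hpk]
    simpa using Nat.sub_dvd_pow_sub_pow a 1 (k / e)
  have hx1 : x ^ (p ^ m - 1) = 1 := by
    have := FiniteField.pow_card_sub_one_eq_one x hx0
    rwa [hcard] at this
  -- main computation
  have hexp : (p ^ k - 1) * N = (p ^ m - 1) * t := by
    rw [ht, hpm, ← hNmul]; ring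
  have key : (-1 : K) ^ N = 1 := by
    rw [← hx, ← pow_mul, hexp, pow_mul, hx1, one_pow]
  rw [hNodd.neg_one_pow] at key
  -- -1 ≠ 1 in K
  have hchar : ringChar K ≠ 2 := by
    intro h2
    have h3 := FiniteField.even_card_iff_char_two.mp h2
    rw [hcard] at h3
    have h4 : Odd (p ^ m) := hpodd.pow
    rw [Nat.odd_iff] at h4
    omega
  exact Ring.neg_one_ne_one_of_char_ne_two hchar key
end

section
/- An 𝔽_p-linear bijection A of M × M commutes with diag(m_a, m_a) for every a ∈ R if and only if there exist c₁, c₂, c₃, c₄ ∈ M such that A(x,y) = (c₁x + c₂y, c₃x + c₄y) for all (x,y) ∈ M × M; moreover this centralizer of S_R in GL(M × M) coincides with the centralizer of the full group S = {diag(m_a, m_a) : a ∈ M^×}. -/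
/-! The scalars `b` for which `A` commutes with multiplication by `b` form a subfield of `M`.
A subfield of `𝔽_{p^m}` has order `p^d` with `1 ≤ d ≤ m`; if it contains an element of order `p'`
then `p' ∣ p^d - 1`, and primitivity of `p'` forces `d = m`. So commuting with `S_R` already means
commuting with all scalars, i.e. `A` is `M`-linear, which is the 2×2 matrix form. -/

namespace AddMonoidHom

variable {K V W : Type*} [Field K] [AddCommGroup V] [Module K V] [AddCommGroup W] [Module K W]

def smulCommSubfield (f : V →+ W) : Subfield K where
  carrier := {b | ∀ v, f (b • v) = b • f v}
  zero_mem' v := by simp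
  one_mem' v := by simp
  add_mem' {b c} hb hc v := by simp only [add_smul, map_add, hb v, hc v]
  mul_mem' {b c} hb hc v := by simp only [mul_smul, hb (c • v), hc v]
  neg_mem' {b} hb v := by simp only [neg_smul, map_neg, hb v]
  inv_mem' b hb v := by
    rcases eq_or_ne b 0 with rfl | hb0
    · simp
    · calc f (b⁻¹ • v) = b⁻¹ • b • f (b⁻¹ • v) := (inv_smul_smul₀ hb0 _).symm
        _ = b⁻¹ • f v := by rw [← hb, smul_inv_smul₀ hb0]

@[simp]
theorem mem_smulCommSubfield {f : V →+ W} {b : K} :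
    b ∈ f.smulCommSubfield ↔ ∀ v, f (b • v) = b • f v :=
  Iff.rfl

end AddMonoidHom

theorem AddMonoidHom.forall_map_smul_iff_exists_coeffs {K : Type*} [CommSemiring K]
    (f : K × K →+ K × K) :
    (∀ (b : K) z, f (b • z) = b • f z) ↔
      ∃ c₁ c₂ c₃ c₄ : K, ∀ x y, f (x, y) = (c₁ * x + c₂ * y, c₃ * x + c₄ * y) := by
  constructor
  · intro hf
    refine ⟨(f (1, 0)).1, (f (0, 1)).1, (f (1, 0)).2, (f (0, 1)).2, fun x y => ?_⟩
    have hxy : ((x, y) : K × K) = x • (1, 0) + y • (0, 1) := by ext <;> simp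
    rw [hxy, map_add, hf, hf]
    ext <;> simp [mul_comm]
  · rintro ⟨c₁, c₂, c₃, c₄, hc⟩ b ⟨x, y⟩
    simp only [Prod.smul_mk, smul_eq_mul, hc, Prod.mk.injEq]
    constructor <;> ring

theorem Subfield.eq_top_of_mem_of_orderOf_not_dvd {K : Type*} [Field K] [Finite K] {p m : ℕ}
    (hp : p.Prime) (hcard : Nat.card K = p ^ m) (L : Subfield K) {a : K} (haL : a ∈ L)
    (ha : a ≠ 0) (hprim : ∀ i, 1 ≤ i → i ≤ m - 1 → ¬ orderOf a ∣ p ^ i - 1) : L = ⊤ := by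
  obtain ⟨d, hdm, hd⟩ : ∃ d ≤ m, Nat.card L = p ^ d :=
    (Nat.dvd_prime_pow hp).1 (hcard ▸ L.toAddSubgroup.card_addSubgroup_dvd_card)
  have hd1 : 1 ≤ d := Nat.pos_of_ne_zero fun h0 =>
    (Finite.one_lt_card (α := L)).ne' (by rw [hd, h0, pow_zero])
  have hord : orderOf a ∣ p ^ d - 1 := by
    have : Fintype L := Fintype.ofFinite L
    rw [← hd, Nat.card_eq_fintype_card]
    refine orderOf_dvd_of_pow_eq_one ?_
    have h := FiniteField.pow_card_sub_one_eq_one (⟨a, haL⟩ : L) (Subtype.coe_ne_coe.1 ha)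
    simpa using Subtype.ext_iff.1 h
  have hdm : d = m := by
    by_contra h
    exact hprim d hd1 (by omega) hord
  refine eq_top_iff.2 fun b _ => ?_
  exact (AddSubgroup.eq_top_iff' _).1
    (L.toAddSubgroup.eq_top_of_card_eq (hd.trans (hdm ▸ hcard.symm))) b

theorem stmt_7_general (p m p' : ℕ) (hp : Nat.Prime p)
    (K : Type) [Field K] [Fintype K] (hcard : Fintype.card K = p ^ m)
    (hp' : Nat.Prime p') (hdvd : p' ∣ p ^ m - 1)
    (hprim : ∀ i : ℕ, 1 ≤ i → i ≤ m - 1 → ¬ p' ∣ p ^ i - 1)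
    (A : K × K ≃+ K × K) :
    ((∀ a : K, a ≠ 0 → (∃ j : ℕ, orderOf a = p' ^ j) →
        ∀ z : K × K, A (a * z.1, a * z.2) = (a * (A z).1, a * (A z).2)) ↔
      ∃ c₁ c₂ c₃ c₄ : K, ∀ x y : K, A (x, y) = (c₁ * x + c₂ * y, c₃ * x + c₄ * y)) ∧
    ((∀ a : K, a ≠ 0 → (∃ j : ℕ, orderOf a = p' ^ j) →
        ∀ z : K × K, A (a * z.1, a * z.2) = (a * (A z).1, a * (A z).2)) ↔
      (∀ a : K, a ≠ 0 →
        ∀ z : K × K, A (a * z.1, a * z.2) = (a * (A z).1, a * (A z).2))) := by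
  classical
  set f : K × K →+ K × K := A.toAddMonoidHom
  have key : (∀ a : K, a ≠ 0 → (∃ j : ℕ, orderOf a = p' ^ j) →
      ∀ z : K × K, A (a * z.1, a * z.2) = (a * (A z).1, a * (A z).2)) ↔
      ∀ (b : K) z, f (b • z) = b • f z := by
    refine ⟨fun h => ?_, fun h a _ _ => h a⟩
    have : Fact p'.Prime := ⟨hp'⟩
    obtain ⟨u, hu⟩ := exists_prime_orderOf_dvd_card (G := Kˣ) p'
      (show p' ∣ Fintype.card Kˣ by rwa [Fintype.card_units, hcard])
    have hu' : orderOf (u : K) = p' := by rw [orderOf_units, hu]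
    have htop := f.smulCommSubfield.eq_top_of_mem_of_orderOf_not_dvd hp
      (Nat.card_eq_fintype_card.trans hcard) (h u u.ne_zero ⟨1, by rw [pow_one, hu']⟩)
      u.ne_zero (hu' ▸ hprim)
    exact fun b => f.mem_smulCommSubfield.1 (htop ▸ Subfield.mem_top b)
  exact ⟨key.trans f.forall_map_smul_iff_exists_coeffs,
    ⟨fun h a _ => key.1 h a, fun h a ha _ => h a ha⟩⟩

/-- Centralizer of `S_R` in `GL(M × M)`: an additive (equivalently `𝔽_p`-linear)
bijection `A` of `M × M` commutes with `diag(m_a, m_a)` for all `a ∈ R` iff it has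
the form `A(x,y) = (c₁x + c₂y, c₃x + c₄y)`; moreover this centralizer coincides
with the centralizer of the full group `S = {diag(m_a,m_a) : a ∈ M^×}`. -/
theorem stmt_7 (p m p' : ℕ) (hp : Nat.Prime p) (hp2 : p ≠ 2) (hm : 2 < m)
    (K : Type) [Field K] [Fintype K] (hcard : Fintype.card K = p ^ m)
    (hp' : Nat.Prime p') (hdvd : p' ∣ p ^ m - 1)
    (hprim : ∀ i : ℕ, 1 ≤ i → i ≤ m - 1 → ¬ p' ∣ p ^ i - 1)
    (A : K × K ≃+ K × K) :
    ((∀ a : K, a ≠ 0 → (∃ j : ℕ, orderOf a = p' ^ j) →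
        ∀ z : K × K, A (a * z.1, a * z.2) = (a * (A z).1, a * (A z).2)) ↔
      ∃ c₁ c₂ c₃ c₄ : K, ∀ x y : K, A (x, y) = (c₁ * x + c₂ * y, c₃ * x + c₄ * y)) ∧
    ((∀ a : K, a ≠ 0 → (∃ j : ℕ, orderOf a = p' ^ j) →
        ∀ z : K × K, A (a * z.1, a * z.2) = (a * (A z).1, a * (A z).2)) ↔
      (∀ a : K, a ≠ 0 →
        ∀ z : K × K, A (a * z.1, a * z.2) = (a * (A z).1, a * (A z).2))) :=
  stmt_7_general p m p' hp K hcard hp' hdvd hprim A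
end

section
/- An 𝔽_p-linear bijection A of M × M normalizes S_R (i.e., A^{-1}·S_R·A = S_R) if and only if there exist c₁, c₂, c₃, c₄ ∈ M and an integer t with 0 ≤ t < m such that A(x,y) = (c₁x^{p^t} + c₂y^{p^t}, c₃x^{p^t} + c₄y^{p^t}) for all (x,y) ∈ M × M; moreover the normalizer of S_R in GL(M × M) coincides with the normalizer of the full group S = {diag(m_a, m_a) : a ∈ M^×}. -/
/-! If `A` normalizes `{diag(m_b, m_b) : b ∈ T}`, then `A m_b A⁻¹ = m_{σ b}` for each `b ∈ T`.
The scalars `b` for which `A m_b A⁻¹` is a scalar multiplication form a subring, so as soon as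
`T` generates `M` as a ring, `σ` extends to a ring endomorphism of `M` and `A` is `σ`-semilinear.
Every ring endomorphism of `𝔽_{p^m}` is `x ↦ x^{p^t}` with `t < m`, which is the stated shape
of `A`. Conversely such an `A` conjugates `m_b` to `m_{σ⁻¹ b}`, and both `R` and `M^×` are
stable under field automorphisms. Finally `R` generates `M`: it contains an element of order
`p'`, which lies in no proper subfield `𝔽_{p^d}` since `p' ∤ p^d - 1` for `0 < d < m`. -/

/-- The map `diag(m_a, m_a) : (x,y) ↦ (ax, ay)` of `M × M`. -/
def diagMul (K : Type) [Field K] (a : K) : K × K → K × K := fun z => (a * z.1, a * z.2)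

/-- Conjugation of a set of self-maps of `M × M` by the additive bijection `A`:
`A⁻¹·S·A = {A⁻¹ ∘ f ∘ A : f ∈ S}`. -/
def conjSet (K : Type) [Field K] (A : K × K ≃+ K × K) (S : Set (K × K → K × K)) :
    Set (K × K → K × K) :=
  (fun f => (A.symm : K × K → K × K) ∘ f ∘ (A : K × K → K × K)) '' S

theorem AddEquiv.exists_ringHom_map_smul {K V W : Type*} [Field K] [AddCommGroup V] [Module K V]
    [AddCommGroup W] [Module K W] [Nontrivial W] (A : V ≃+ W) {T : Set K}
    (hT : Subring.closure T = ⊤) (h : ∀ b ∈ T, ∃ a : K, ∀ v, A (b • v) = a • A v) :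
    ∃ σ : K →+* K, ∀ (c : K) v, A (c • v) = σ c • A v := by
  let S : Subring K :=
    { carrier := {c | ∃ d : K, ∀ v, A (c • v) = d • A v}
      zero_mem' := ⟨0, fun v => by simp⟩
      one_mem' := ⟨1, fun v => by simp⟩
      add_mem' := fun ⟨d, hd⟩ ⟨d', hd'⟩ =>
        ⟨d + d', fun v => by simp only [add_smul, map_add, hd, hd']⟩
      neg_mem' := fun ⟨d, hd⟩ => ⟨-d, fun v => by simp only [neg_smul, map_neg, hd]⟩
      mul_mem' := fun ⟨d, hd⟩ ⟨d', hd'⟩ => ⟨d * d', fun v => by simp only [mul_smul, hd, hd']⟩ }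
  have hS (c : K) : ∃ d : K, ∀ v, A (c • v) = d • A v :=
    (Subring.closure_le.mpr h : Subring.closure T ≤ S) (hT ▸ Subring.mem_top c)
  choose σ hσ using hS
  obtain ⟨w, hw⟩ := exists_ne (0 : W)
  have hσ_eq (c d : K) (hd : ∀ v, A (c • v) = d • A v) : σ c = d :=
    smul_left_injective K hw <| by simpa using (hσ c (A.symm w)).symm.trans (hd (A.symm w))
  refine ⟨{ toFun := σ, map_one' := ?_, map_mul' := ?_, map_zero' := ?_, map_add' := ?_ }, hσ⟩
  · exact hσ_eq 1 1 (by simp)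
  · exact fun c c' => hσ_eq _ _ fun v => by rw [mul_smul, hσ, hσ, mul_smul]
  · exact hσ_eq 0 0 (by simp)
  · exact fun c c' => hσ_eq _ _ fun v => by rw [add_smul, map_add, hσ, hσ, add_smul]

theorem map_smul_eq_pow_smul_iff {R F : Type*} [CommRing R] [FunLike F (R × R) (R × R)]
    [AddHomClass F (R × R) (R × R)] (A : F) (n : ℕ) :
    (∀ (c : R) v, A (c • v) = c ^ n • A v) ↔
      ∃ c₁ c₂ c₃ c₄ : R, ∀ x y, A (x, y) = (c₁ * x ^ n + c₂ * y ^ n, c₃ * x ^ n + c₄ * y ^ n) := by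
  constructor
  · intro hA
    refine ⟨(A (1, 0)).1, (A (0, 1)).1, (A (1, 0)).2, (A (0, 1)).2, fun x y => ?_⟩
    have hxy : ((x, y) : R × R) = x • (1, 0) + y • (0, 1) := by simp
    rw [hxy, map_add, hA, hA]
    ext <;> simp [mul_comm]
  · rintro ⟨c₁, c₂, c₃, c₄, hA⟩ c ⟨x, y⟩
    simp only [Prod.smul_mk, smul_eq_mul, hA, Prod.mk.injEq, mul_pow]
    constructor <;> ring

theorem FiniteField.exists_lt_ringHom_eq_pow {K : Type*} [Field K] [Fintype K] {p m : ℕ}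
    [hp : Fact p.Prime] [CharP K p] (hcard : Fintype.card K = p ^ m) (σ : K →+* K) :
    ∃ t < m, ∀ x, σ x = x ^ p ^ t := by
  let _ := ZMod.algebra K p
  have hrank : Module.finrank (ZMod p) K = m := by
    have := (Module.card_eq_pow_finrank (K := ZMod p) (V := K)).symm
    rw [ZMod.card, hcard] at this
    exact Nat.pow_right_injective hp.out.two_le this
  let f : K →ₐ[ZMod p] K :=
    { σ with commutes' := RingHom.congr_fun (Subsingleton.elim (σ.comp (algebraMap _ _)) _) }
  obtain ⟨⟨t, ht⟩, hf⟩ := (bijective_frobeniusAlgHom_pow (ZMod p) K).2 f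
  refine ⟨t, hrank ▸ ht, fun x => ?_⟩
  have := congrArg (· x) hf
  simp only [AlgHom.coe_pow, coe_frobeniusAlgHom, pow_iterate, ZMod.card] at this
  exact this.symm

theorem Subring.eq_top_of_pow_ne_self {K : Type*} [Field K] [Fintype K] {p m : ℕ}
    [hp : Fact p.Prime] [CharP K p] (hcard : Fintype.card K = p ^ m) (E : Subring K) {ζ : K}
    (hζE : ζ ∈ E) (hζ : ∀ i, 0 < i → i < m → ζ ^ p ^ i ≠ ζ) : E = ⊤ := by
  classical
  let _ : Field E := Fintype.fieldOfDomain E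
  obtain ⟨d, -, hd⟩ := FiniteField.card E p
  have hdm : (d : ℕ) ≤ m := (Nat.pow_le_pow_iff_right hp.out.one_lt).mp <|
    hd ▸ hcard ▸ Fintype.card_subtype_le _
  obtain rfl : (d : ℕ) = m := by
    by_contra hne
    have hpow : (⟨ζ, hζE⟩ : E) ^ p ^ (d : ℕ) = ⟨ζ, hζE⟩ := hd ▸ FiniteField.pow_card _
    exact hζ d d.pos (by omega) (congrArg Subtype.val hpow)
  have hsurj := ((Fintype.bijective_iff_injective_and_card (Subtype.val : E → K)).mpr
    ⟨Subtype.val_injective, hd.trans hcard.symm⟩).2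
  exact eq_top_iff.mpr fun x _ => by obtain ⟨y, rfl⟩ := hsurj x; exact y.2

theorem FiniteField.closure_setOf_orderOf_eq_pow_eq_top {K : Type*} [Field K] [Fintype K]
    {p m p' : ℕ} [hp : Fact p.Prime] [CharP K p] (hcard : Fintype.card K = p ^ m) (hp' : p'.Prime)
    (hdvd : p' ∣ p ^ m - 1) (hprim : ∀ i : ℕ, 1 ≤ i → i ≤ m - 1 → ¬ p' ∣ p ^ i - 1) :
    Subring.closure {a : K | a ≠ 0 ∧ ∃ j : ℕ, orderOf a = p' ^ j} = ⊤ := by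
  classical
  have := Fact.mk hp'
  obtain ⟨u, hu⟩ :=
    exists_prime_orderOf_dvd_card (G := Kˣ) p' (by rwa [Fintype.card_units, hcard])
  have hζ : orderOf (u : K) = p' := by rwa [orderOf_units]
  refine Subring.eq_top_of_pow_ne_self hcard _
    (Subring.subset_closure ⟨u.ne_zero, 1, by rw [hζ, pow_one]⟩)
    fun i hi him h => hprim i hi (by omega) (hζ ▸ orderOf_dvd_of_pow_eq_one ?_)
  have h1 : 1 ≤ p ^ i := Nat.one_le_pow _ _ hp.out.pos
  exact mul_left_cancel₀ u.ne_zero (by rw [← pow_succ', Nat.sub_add_cancel h1, h, mul_one])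

theorem exists_map_smul_of_subset_conjSet {K : Type} [Field K] (A : K × K ≃+ K × K) {T : Set K}
    (h : diagMul K '' T ⊆ conjSet K A (diagMul K '' T)) :
    ∀ b ∈ T, ∃ a : K, ∀ v, A (b • v) = a • A v := by
  intro b hb
  obtain ⟨_, ⟨a, -, rfl⟩, hba⟩ := h ⟨b, hb, rfl⟩
  refine ⟨a, fun v => ?_⟩
  have hv : A.symm (a • A v) = b • v := congrFun hba v
  rw [← hv, A.apply_symm_apply]

theorem conjSet_diagMul_image_of_map_smul {K : Type} [Field K] (A : K × K ≃+ K × K) (σ : K ≃+* K)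
    (hA : ∀ (c : K) v, A (c • v) = σ c • A v) {T : Set K} (hT : ∀ a, σ a ∈ T ↔ a ∈ T) :
    conjSet K A (diagMul K '' T) = diagMul K '' T := by
  have hconj (b : K) : (A.symm : K × K → K × K) ∘ diagMul K b ∘ A = diagMul K (σ.symm b) :=
    funext fun v => A.symm_apply_eq.mpr <| by
      show b • A v = A (σ.symm b • v)
      rw [hA, σ.apply_symm_apply]
  have hTσ : σ.symm '' T = T := Set.ext fun a => by
    refine ⟨?_, fun ha => ⟨σ a, (hT a).mpr ha, σ.symm_apply_apply a⟩⟩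
    rintro ⟨b, hb, rfl⟩
    exact (hT _).mp (by rwa [σ.apply_symm_apply])
  rw [conjSet, Set.image_image, funext hconj, ← Set.image_image, hTσ]

theorem conjSet_diagMul_image_eq_iff {K : Type} [Field K] [Fintype K] {p m : ℕ} [Fact p.Prime]
    [CharP K p] (hcard : Fintype.card K = p ^ m) (A : K × K ≃+ K × K) {T : Set K}
    (hT : Subring.closure T = ⊤) (hTσ : ∀ (σ : K ≃+* K) a, σ a ∈ T ↔ a ∈ T) :
    conjSet K A (diagMul K '' T) = diagMul K '' T ↔
      ∃ t < m, ∀ (c : K) v, A (c • v) = c ^ p ^ t • A v := by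
  constructor
  · intro h
    obtain ⟨σ, hσ⟩ := A.exists_ringHom_map_smul hT (exists_map_smul_of_subset_conjSet A h.ge)
    obtain ⟨t, ht, hσt⟩ := FiniteField.exists_lt_ringHom_eq_pow hcard σ
    exact ⟨t, ht, fun c v => hσt c ▸ hσ c v⟩
  · rintro ⟨t, -, hA⟩
    exact conjSet_diagMul_image_of_map_smul A (iterateFrobeniusEquiv K p t) hA (hTσ _)

theorem stmt_8_general (p m p' : ℕ) (hp : Nat.Prime p)
    (K : Type) [Field K] [Fintype K] (hcard : Fintype.card K = p ^ m)
    (hp' : Nat.Prime p') (hdvd : p' ∣ p ^ m - 1)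
    (hprim : ∀ i : ℕ, 1 ≤ i → i ≤ m - 1 → ¬ p' ∣ p ^ i - 1)
    (A : K × K ≃+ K × K) :
    ((conjSet K A (diagMul K '' {a : K | a ≠ 0 ∧ ∃ j : ℕ, orderOf a = p' ^ j})
          = diagMul K '' {a : K | a ≠ 0 ∧ ∃ j : ℕ, orderOf a = p' ^ j}) ↔
      ∃ (c₁ c₂ c₃ c₄ : K) (t : ℕ), t < m ∧
        ∀ x y : K, A (x, y) = (c₁ * x ^ p ^ t + c₂ * y ^ p ^ t,
                               c₃ * x ^ p ^ t + c₄ * y ^ p ^ t)) ∧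
    ((conjSet K A (diagMul K '' {a : K | a ≠ 0 ∧ ∃ j : ℕ, orderOf a = p' ^ j})
          = diagMul K '' {a : K | a ≠ 0 ∧ ∃ j : ℕ, orderOf a = p' ^ j}) ↔
      (conjSet K A (diagMul K '' {a : K | a ≠ 0}) = diagMul K '' {a : K | a ≠ 0})) := by
  have := Fact.mk hp
  have := charP_of_card_eq_prime_pow hcard
  have hR := conjSet_diagMul_image_eq_iff hcard A
    (FiniteField.closure_setOf_orderOf_eq_pow_eq_top hcard hp' hdvd hprim)
    fun σ a => by simp [show orderOf (σ a) = orderOf a from MulEquiv.orderOf_eq σ.toMulEquiv a]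
  have hU := conjSet_diagMul_image_eq_iff hcard A (T := {a : K | a ≠ 0})
    (eq_top_iff.mpr fun x _ => by
      by_cases hx : x = 0
      · rw [hx]; exact zero_mem _
      · exact Subring.subset_closure hx)
    fun σ a => by simp
  have hform : (∃ t < m, ∀ (c : K) v, A (c • v) = c ^ p ^ t • A v) ↔
      ∃ (c₁ c₂ c₃ c₄ : K) (t : ℕ), t < m ∧ ∀ x y : K,
        A (x, y) = (c₁ * x ^ p ^ t + c₂ * y ^ p ^ t, c₃ * x ^ p ^ t + c₄ * y ^ p ^ t) := by
    simp only [map_smul_eq_pow_smul_iff A]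
    exact ⟨fun ⟨t, ht, c₁, c₂, c₃, c₄, h⟩ => ⟨c₁, c₂, c₃, c₄, t, ht, h⟩,
      fun ⟨c₁, c₂, c₃, c₄, t, ht, h⟩ => ⟨t, ht, c₁, c₂, c₃, c₄, h⟩⟩
  rw [hR, hU, hform]
  exact ⟨Iff.rfl, Iff.rfl⟩

/-- Normalizer of `S_R` in `GL(M × M)`: an additive (equivalently `𝔽_p`-linear)
bijection `A` of `M × M` satisfies `A⁻¹·S_R·A = S_R` iff it has the form
`A(x,y) = (c₁x^{p^t} + c₂y^{p^t}, c₃x^{p^t} + c₄y^{p^t})` for some `0 ≤ t < m`;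
moreover the normalizer of `S_R` coincides with the normalizer of the full group
`S = {diag(m_a,m_a) : a ∈ M^×}`. -/
theorem stmt_8 (p m p' : ℕ) (hp : Nat.Prime p) (hp2 : p ≠ 2) (hm : 2 < m)
    (K : Type) [Field K] [Fintype K] (hcard : Fintype.card K = p ^ m)
    (hp' : Nat.Prime p') (hdvd : p' ∣ p ^ m - 1)
    (hprim : ∀ i : ℕ, 1 ≤ i → i ≤ m - 1 → ¬ p' ∣ p ^ i - 1)
    (A : K × K ≃+ K × K) :
    ((conjSet K A (diagMul K '' {a : K | a ≠ 0 ∧ ∃ j : ℕ, orderOf a = p' ^ j})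
          = diagMul K '' {a : K | a ≠ 0 ∧ ∃ j : ℕ, orderOf a = p' ^ j}) ↔
      ∃ (c₁ c₂ c₃ c₄ : K) (t : ℕ), t < m ∧
        ∀ x y : K, A (x, y) = (c₁ * x ^ p ^ t + c₂ * y ^ p ^ t,
                               c₃ * x ^ p ^ t + c₄ * y ^ p ^ t)) ∧
    ((conjSet K A (diagMul K '' {a : K | a ≠ 0 ∧ ∃ j : ℕ, orderOf a = p' ^ j})
          = diagMul K '' {a : K | a ≠ 0 ∧ ∃ j : ℕ, orderOf a = p' ^ j}) ↔
      (conjSet K A (diagMul K '' {a : K | a ≠ 0}) = diagMul K '' {a : K | a ≠ 0})) :=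
  stmt_8_general p m p' hp K hcard hp' hdvd hprim A
end

section
/- The p′-adic valuation of the order of the general linear group GL(2m, 𝔽_p) equals 2·ν_{p′}(p^m − 1), where ν_{p′} denotes p′-adic valuation. Equivalently, the p′-part of |GL(2m, 𝔽_p)| = p^{m(2m−1)}·∏_{i=1}^{2m}(p^i − 1) is the square of the p′-part of p^m − 1. -/
/-- If `p'` is a `p`-primitive prime divisor of `p^m - 1`, then the `p'`-adic
valuation of `|GL(2m, 𝔽_p)|` equals `2·ν_{p'}(p^m - 1)`. -/

theorem stmt_9 (p m p' : ℕ) (hp : Nat.Prime p) (hp2 : p ≠ 2) (hm : 2 ≤ m)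
    (hp' : Nat.Prime p') (hdvd : p' ∣ p ^ m - 1)
    (hprim : ∀ i : ℕ, 1 ≤ i → i ≤ m - 1 → ¬ p' ∣ p ^ i - 1) :
    (Nat.card (GL (Fin (2 * m)) (ZMod p))).factorization p'
      = 2 * (p ^ m - 1).factorization p' := by
  have hp1 : 1 < p := hp.one_lt
  have hpow : ∀ j : ℕ, 1 ≤ j → 1 < p ^ j := fun j hj => Nat.one_lt_pow (by omega) hp1
  -- p' ≠ p
  have hp'p : p' ≠ p := by
    rintro rfl
    have h1 : p' ∣ p' ^ m := dvd_pow_self p' (by omega)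
    have h2 := Nat.dvd_sub h1 hdvd
    have h3 : p' ^ m - (p' ^ m - 1) = 1 := by have := hpow m (by omega); omega
    rw [h3] at h2
    exact hp'.one_lt.ne' (Nat.dvd_one.mp h2)
  have hndp : ∀ i : ℕ, ¬ p' ∣ p ^ i := fun i h =>
    hp'p ((Nat.prime_dvd_prime_iff_eq hp' hp).mp (hp'.dvd_of_dvd_pow h))
  -- p' is odd
  have hp'2 : p' ≠ 2 := by
    rintro rfl
    obtain ⟨k, hk⟩ := hp.odd_of_ne_two hp2
    exact hprim 1 le_rfl (by omega) (by rw [pow_one]; omega)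
  -- p' does not divide p^j - 1 for 1 ≤ j < 2m, j ≠ m
  have hnd : ∀ j : ℕ, 1 ≤ j → j < 2 * m → j ≠ m → ¬ p' ∣ p ^ j - 1 := by
    intro j hj1 hj2 hjm hd
    rcases lt_or_gt_of_ne hjm with h | h
    · exact hprim j hj1 (by omega) hd
    · have hd2 : p' ∣ p ^ j - p ^ m := by
        have : p ^ j - p ^ m = (p ^ j - 1) - (p ^ m - 1) := by
          have := hpow m (by omega); have := hpow j hj1; omega
        rw [this]; exact Nat.dvd_sub hd hdvd
      have heq : p ^ j - p ^ m = p ^ m * (p ^ (j - m) - 1) := by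
        have hjm' : m + (j - m) = j := by omega
        rw [Nat.mul_sub, mul_one, ← pow_add, hjm']
      rw [heq] at hd2
      have hd3 : p' ∣ p ^ (j - m) - 1 := (hp'.dvd_mul.mp hd2).resolve_left (hndp m)
      exact hprim (j - m) (by omega) (by omega) hd3
  -- p' ∤ p^m + 1
  have hnd2 : ¬ p' ∣ p ^ m + 1 := by
    intro h
    have h1 : p' ∣ (p ^ m + 1) - (p ^ m - 1) := Nat.dvd_sub h hdvd
    have h2 : (p ^ m + 1) - (p ^ m - 1) = 2 := by have := hpow m (by omega); omega
    rw [h2] at h1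
    exact hp'2 ((Nat.prime_dvd_prime_iff_eq hp' Nat.prime_two).mp h1)
  -- valuation of p^{2m} - 1 equals valuation of p^m - 1
  have hval2m : (p ^ (2 * m) - 1).factorization p' = (p ^ m - 1).factorization p' := by
    have heq : p ^ (2 * m) - 1 = (p ^ m - 1) * (p ^ m + 1) := by
      have h0 : p ^ (2 * m) = p ^ m * p ^ m := by rw [← pow_add]; congr 1; omega
      have key : (p ^ m - 1) * (p ^ m + 1) = p ^ m * (p ^ m + 1) - (p ^ m + 1) := by
        rw [Nat.sub_mul, one_mul]
      have key2 : p ^ m * (p ^ m + 1) = p ^ m * p ^ m + p ^ m := by ring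
      have hpm := hpow m (by omega)
      omega
    rw [heq, Nat.factorization_mul (by have := hpow m (by omega); omega) (by omega)]
    simp [Nat.factorization_eq_zero_of_not_dvd hnd2]
  -- cardinality of GL
  have hcard : Nat.card (GL (Fin (2 * m)) (ZMod p)) =
      ∏ i : Fin (2 * m), (p ^ (2 * m) - p ^ (i : ℕ)) := by
    haveI : Fact p.Prime := ⟨hp⟩
    rw [Matrix.card_GL_field]
    simp [ZMod.card]
  rw [hcard]
  have hne : ∀ i : Fin (2 * m), p ^ (2 * m) - p ^ (i : ℕ) ≠ 0 := by
    intro i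
    have : p ^ (i : ℕ) < p ^ (2 * m) := Nat.pow_lt_pow_right hp1 i.isLt
    omega
  rw [Nat.factorization_prod (fun i _ => hne i)]
  rw [Finset.sum_apply']
  -- each term
  have hterm : ∀ i : Fin (2 * m),
      (p ^ (2 * m) - p ^ (i : ℕ)).factorization p'
        = (p ^ (2 * m - (i : ℕ)) - 1).factorization p' := by
    intro i
    have heq : p ^ (2 * m) - p ^ (i : ℕ) = p ^ (i : ℕ) * (p ^ (2 * m - (i : ℕ)) - 1) := by
      have h1 : (i : ℕ) + (2 * m - (i : ℕ)) = 2 * m := by omega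
      rw [Nat.mul_sub, mul_one, ← pow_add, h1]
    rw [heq, Nat.factorization_mul (pow_ne_zero _ (by omega))
      (by have := hpow (2 * m - (i : ℕ)) (by have := i.isLt; omega); omega),
      Finsupp.add_apply, Nat.factorization_eq_zero_of_not_dvd (hndp (i : ℕ)), zero_add]
  simp only [hterm]
  -- sum over Fin: only i = 0 and i = m contribute
  have hzero : ∀ i : Fin (2 * m), (i : ℕ) ≠ 0 → (i : ℕ) ≠ m →
      (p ^ (2 * m - (i : ℕ)) - 1).factorization p' = 0 := by
    intro i h0 hmne
    apply Nat.factorization_eq_zero_of_not_dvd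
    exact hnd (2 * m - (i : ℕ)) (by have := i.isLt; omega) (by omega) (by have := i.isLt; omega)
  have h2m : 0 < 2 * m := by omega
  rw [← Finset.sum_subset (Finset.subset_univ {(⟨0, h2m⟩ : Fin (2 * m)), ⟨m, by omega⟩})
    (by
      intro i _ hi
      simp only [Finset.mem_insert, Finset.mem_singleton] at hi
      push_neg at hi
      apply hzero i
      · intro h; exact hi.1 (Fin.ext h)
      · intro h; exact hi.2 (Fin.ext h))]
  rw [Finset.sum_pair (Fin.ne_of_val_ne (by simp; omega))]
  simp only [Nat.sub_zero]
  rw [show 2 * m - m = m by omega, hval2m]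
  ring
end

section
/- Let P = (M × M, +, ∗) be a (q,r)-biprojective pre-semifield and let C_P be the centralizer of Z_R^{(q,r)} in Aut(∗). Assume Z^{(q,r)} is a subgroup of C_P of index I with p′ ∤ I. Then Z_R^{(q,r)} is a Sylow p′-subgroup of Aut(∗). -/
/-- The general `(q,r)`-biprojective pre-semifield multiplication on `M × M`
(the polarization of a `(q,r)`-biprojective map):
`(x,y) ∗ (u,v) = (a₀(x^q u + x u^q) + b₀(x^q v + u^q y) + c₀(x v^q + u y^q) + d₀(y^q v + y v^q),
                  a₁(x^r u + x u^r) + b₁(x^r v + u^r y) + c₁(x v^r + u y^r) + d₁(y^r v + y v^r))`. -/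
def bstar (K : Type) [Field K] (q r : ℕ) (a₀ b₀ c₀ d₀ a₁ b₁ c₁ d₁ : K)
    (z w : K × K) : K × K :=
  (a₀ * (z.1 ^ q * w.1 + z.1 * w.1 ^ q) + b₀ * (z.1 ^ q * w.2 + w.1 ^ q * z.2)
      + c₀ * (z.1 * w.2 ^ q + w.1 * z.2 ^ q) + d₀ * (z.2 ^ q * w.2 + z.2 * w.2 ^ q),
   a₁ * (z.1 ^ r * w.1 + z.1 * w.1 ^ r) + b₁ * (z.1 ^ r * w.2 + w.1 ^ r * z.2)
      + c₁ * (z.1 * w.2 ^ r + w.1 * z.2 ^ r) + d₁ * (z.2 ^ r * w.2 + z.2 * w.2 ^ r))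

/-- The autotopism `γ_u = (N_u, L_u, L_u)` with `N_u(x,y) = (u^{q+1}x, u^{r+1}y)`
and `L_u(x,y) = (ux, uy)`, as a triple of additive automorphisms of `M × M`. -/
noncomputable def gammaTriple (K : Type) [Field K] (q r : ℕ) (u : Kˣ) :
    AddAut (K × K) × AddAut (K × K) × AddAut (K × K) :=
  (AddEquiv.prodCongr (AddAut.mulLeft (u ^ (q + 1))) (AddAut.mulLeft (u ^ (r + 1))),
   AddEquiv.prodCongr (AddAut.mulLeft u) (AddAut.mulLeft u),
   AddEquiv.prodCongr (AddAut.mulLeft u) (AddAut.mulLeft u))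

/-- The multiplicative group structure on `AddAut A` (composition), as in the older Mathlib,
where `AddAut A` was a multiplicative group; it is now an additive group. -/
instance addAutGroupOld (A : Type) [Add A] : Group (AddAut A) where
  mul g h := AddEquiv.trans h g
  one := AddEquiv.refl _
  inv := AddEquiv.symm
  mul_assoc _ _ _ := rfl
  one_mul _ := rfl
  mul_one _ := rfl
  inv_mul_cancel := AddEquiv.self_trans_symm

/-- The autotopism set `Aut(∗)` of a multiplication `∗` on `M × M`, inside the
group `GL(M × M)³` of triples of additive (= `𝔽_p`-linear) bijections. -/
def autSet (K : Type) [Field K] (s : K × K → K × K → K × K) :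
    Set (AddAut (K × K) × AddAut (K × K) × AddAut (K × K)) :=
  {γ | ∀ z w : K × K, γ.1 (s z w) = s (γ.2.1 z) (γ.2.2 w)}

/-! Let `R ≤ M^×` be the Sylow `p'`-subgroup and `Z_R` its image under `u ↦ γ_u`. Since
`|C_P| = I (p^m - 1)` with `p' ∤ I`, `Z_R` is a Sylow `p'`-subgroup of its centralizer `C_P`.
If a `p'`-element `g` of `Aut(∗)` normalizes `Z_R`, then `g γ_u g⁻¹ = γ_v` makes the middle
component of `g` semilinear with respect to a ring endomorphism `σ` of `M` with `σ u = v`: the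
scalars `c` for which `g (c • z) = c' • g z` form a subfield, and it is all of `M` because any
`u ≠ 1` in `R` generates `M` (`p'` is a `p`-primitive divisor of `p^m - 1`). Then `σ` has
`p'`-power order, and its fixed field `𝔽_{p^d}` satisfies `p' ∣ p^m - p^d`, whence `d = m`,
`σ = 1` and `g` centralizes `Z_R`. Finally, a `p`-subgroup that is Sylow in its centralizer and
whose normalizer's `p`-elements centralize it is Sylow: otherwise its normalizer would contain a
`p`-subgroup of larger order, which would lie in the centralizer. -/

open Subgroup

theorem Nat.not_dvd_of_dvd_pow_sub_one {p m p' : ℕ} (hp : p ≠ 0) (hp' : p' ≠ 1) (hm : m ≠ 0)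
    (h : p' ∣ p ^ m - 1) : ¬ p' ∣ p := fun hdvd => hp' <| Nat.dvd_one.1 <| by
  simpa [Nat.sub_sub_self (Nat.pos_of_ne_zero (pow_ne_zero m hp))] using
    Nat.dvd_sub (dvd_pow hdvd hm) h

theorem Nat.factorization_mul_of_not_dvd {p a b : ℕ} (ha : ¬ p ∣ a) (hb : b ≠ 0) :
    (a * b).factorization p = b.factorization p := by
  rw [Nat.factorization_mul (by rintro rfl; exact ha (dvd_zero p)) hb, Finsupp.add_apply,
    Nat.factorization_eq_zero_of_not_dvd ha, zero_add]

theorem iterate_map_smul {K M : Type*} [SMul K M] {g : M → M} {σ : K → K}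
    (h : ∀ c z, g (c • z) = σ c • g z) (n : ℕ) (c : K) (z : M) :
    g^[n] (c • z) = σ^[n] c • g^[n] z := by
  induction n generalizing c z with
  | zero => rfl
  | succ n ih => simp only [Function.iterate_succ_apply, h, ih]

section Semilinear

variable (K : Type*) {V : Type*} [Field K] [AddCommGroup V] [Module K V]

def semilinearSubfield (g : V ≃+ V) : Subfield K where
  carrier := {c | ∃ c' : K, ∀ z, g (c • z) = c' • g z}
  zero_mem' := ⟨0, fun z => by simp⟩
  one_mem' := ⟨1, fun z => by simp⟩
  add_mem' := fun ⟨a', ha⟩ ⟨b', hb⟩ =>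
    ⟨a' + b', fun z => by rw [add_smul, map_add, ha, hb, add_smul]⟩
  mul_mem' := fun ⟨a', ha⟩ ⟨b', hb⟩ =>
    ⟨a' * b', fun z => by rw [mul_smul, ha, hb, mul_smul]⟩
  neg_mem' := fun ⟨a', ha⟩ => ⟨-a', fun z => by rw [neg_smul, map_neg, ha, neg_smul]⟩
  inv_mem' := by
    rintro c ⟨c', hc⟩
    rcases eq_or_ne c 0 with rfl | hc0
    · exact ⟨0, fun z => by simp⟩
    refine ⟨c'⁻¹, fun z => ?_⟩
    have hz : g z = c' • g (c⁻¹ • z) := by rw [← hc, smul_inv_smul₀ hc0]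
    rcases eq_or_ne c' 0 with hc'0 | hc'0
    · have hV : ∀ w : V, w = 0 := fun w =>
        g.injective (by rw [map_zero, ← smul_inv_smul₀ hc0 w, hc, hc'0, zero_smul])
      rw [hV z, smul_zero, map_zero, smul_zero]
    · rw [hz, inv_smul_smul₀ hc'0]

variable {K}

theorem eq_of_map_smul_eq [Nontrivial V] (g : V ≃+ V) {c a b : K}
    (ha : ∀ z, g (c • z) = a • g z) (hb : ∀ z, g (c • z) = b • g z) : a = b := by
  obtain ⟨x, hx⟩ := exists_ne (0 : V)
  refine smul_left_injective K hx ?_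
  simpa only [g.apply_symm_apply] using (ha (g.symm x)).symm.trans (hb (g.symm x))

theorem exists_ringHom_map_smul [Nontrivial V] (g : V ≃+ V) {u v : K}
    (hu : Subfield.closure {u} = ⊤) (huv : ∀ z, g (u • z) = v • g z) :
    ∃ σ : K →+* K, σ u = v ∧ ∀ c z, g (c • z) = σ c • g z := by
  have htop : semilinearSubfield K g = ⊤ :=
    top_unique (hu ▸ (Subfield.closure_le.2 (Set.singleton_subset_iff.2 ⟨v, huv⟩)))
  choose σ hσ using fun c => (htop ▸ Subfield.mem_top c : c ∈ semilinearSubfield K g)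
  let σ' : K →+* K :=
    { toFun := σ
      map_zero' := eq_of_map_smul_eq g (hσ 0) fun z => by simp
      map_one' := eq_of_map_smul_eq g (hσ 1) fun z => by simp
      map_add' := fun a b => eq_of_map_smul_eq g (hσ (a + b)) fun z => by
        rw [add_smul, map_add, hσ, hσ, add_smul]
      map_mul' := fun a b => eq_of_map_smul_eq g (hσ (a * b)) fun z => by
        rw [mul_smul, hσ, hσ, mul_smul] }
  exact ⟨σ', eq_of_map_smul_eq g (hσ u) huv, hσ⟩

end Semilinear

section PrimitivePrimeDivisor

variable {K : Type*} [Field K] [Fintype K] {p m p' : ℕ}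

theorem Subfield.eq_top_of_natCard_eq (F : Subfield K) (h : Nat.card F = Nat.card K) :
    F = ⊤ := by
  have := AddSubgroup.eq_top_of_card_eq F.toAddSubgroup h
  exact eq_top_iff.2 fun x _ => (this ▸ AddSubgroup.mem_top x : x ∈ F.toAddSubgroup)

variable (hp : p.Prime) (hcard : Fintype.card K = p ^ m)
include hp hcard

theorem Subfield.exists_natCard_eq_pow (F : Subfield K) :
    ∃ d, 0 < d ∧ d ≤ m ∧ Nat.card F = p ^ d := by
  have : Fact p.Prime := ⟨hp⟩
  have : CharP K p := charP_of_card_eq_prime_pow hcard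
  let _ : Fintype F := Fintype.ofFinite F
  obtain ⟨d, -, hd⟩ := FiniteField.card F p
  refine ⟨d, d.pos, ?_, by rw [Nat.card_eq_fintype_card, hd]⟩
  have hle : Nat.card F ≤ Nat.card K := Finite.card_subtype_le _
  rw [Nat.card_eq_fintype_card, Nat.card_eq_fintype_card, hd, hcard] at hle
  exact (Nat.pow_le_pow_iff_right hp.one_lt).mp hle

variable (hp' : p'.Prime) (hprim : ∀ i : ℕ, 1 ≤ i → i ≤ m - 1 → ¬ p' ∣ p ^ i - 1)
  (hp'p : ¬ p' ∣ p)
include hp' hprim hp'p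

theorem Subfield.eq_top_of_dvd_sub_natCard (F : Subfield K) (h : p' ∣ p ^ m - Nat.card F) :
    F = ⊤ := by
  obtain ⟨d, hd0, hdm, hd⟩ := F.exists_natCard_eq_pow hp hcard
  refine F.eq_top_of_natCard_eq ?_
  rw [hd, Nat.card_eq_fintype_card, hcard]
  rcases hdm.eq_or_lt with rfl | hdm
  · rfl
  have hsplit : p ^ m - p ^ d = p ^ d * (p ^ (m - d) - 1) := by
    rw [Nat.mul_sub, mul_one, ← pow_add, Nat.add_sub_cancel' hdm.le]
  rw [hd, hsplit] at h
  have hcop : p'.Coprime (p ^ d) := ((Nat.Prime.coprime_iff_not_dvd hp').2 hp'p).pow_right d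
  exact absurd (hcop.dvd_of_dvd_mul_left h) (hprim (m - d) (by omega) (by omega))

theorem Subfield.closure_singleton_eq_top (u : Kˣ) (hu : p' ∣ orderOf u) :
    Subfield.closure {(u : K)} = ⊤ := by
  set F := Subfield.closure {(u : K)}
  have hmem : (u : K) ∈ F := Subfield.subset_closure rfl
  let uF : Fˣ := Units.mk0 ⟨u, hmem⟩ (Subtype.coe_ne_coe.1 u.ne_zero)
  have huF : Units.map F.subtype.toMonoidHom uF = u := Units.ext rfl
  have horder : orderOf uF = orderOf u := by
    rw [← huF, orderOf_injective _ (Units.map_injective Subtype.val_injective)]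
  have hF : p' ∣ Nat.card F - 1 := by
    rw [← Nat.card_units]
    exact hu.trans (horder ▸ orderOf_dvd_natCard uF)
  have hK : p' ∣ p ^ m - 1 := by
    rw [← hcard, ← Nat.card_eq_fintype_card, ← Nat.card_units]
    exact hu.trans (orderOf_dvd_natCard u)
  refine F.eq_top_of_dvd_sub_natCard hp hcard hp' hprim hp'p ?_
  have hF0 : 0 < Nat.card F := Nat.card_pos
  convert Nat.dvd_sub hK hF using 1
  omega

theorem RingAut.eq_one_of_pow_prime_pow_eq_one (σ : RingAut K) (e : ℕ) (hσ : σ ^ p' ^ e = 1) :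
    σ = 1 := by
  have : Fact p'.Prime := ⟨hp'⟩
  have hΓ : IsPGroup p' (zpowers σ) := by
    obtain ⟨i, -, hi⟩ := (Nat.dvd_prime_pow hp').1 (orderOf_dvd_of_pow_eq_one hσ)
    exact IsPGroup.of_card ((Nat.card_zpowers σ).trans hi)
  set F := FixedPoints.subfield (zpowers σ) K
  have hK : Nat.card K = p ^ m := by rw [Nat.card_eq_fintype_card, hcard]
  have hmod : Nat.card F ≡ p ^ m [MOD p'] := hK ▸ (hΓ.card_modEq_card_fixedPoints K).symm
  have hle : Nat.card F ≤ p ^ m := hK ▸ Finite.card_subtype_le _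
  have hF : F = ⊤ :=
    F.eq_top_of_dvd_sub_natCard hp hcard hp' hprim hp'p ((Nat.modEq_iff_dvd' hle).1 hmod)
  ext x
  exact (hF ▸ Subfield.mem_top x : x ∈ F) ⟨σ, mem_zpowers σ⟩

theorem eq_of_map_smul_eq_smul_map {V : Type*} [AddCommGroup V] [Module K V] [Nontrivial V]
    (g : V ≃+ V) (e : ℕ) (hg : (⇑g)^[p' ^ e] = id) (u : Kˣ) (hu : p' ∣ orderOf u) {v : K}
    (huv : ∀ z, g ((u : K) • z) = v • g z) : v = u := by
  obtain ⟨σ, hσu, hσ⟩ :=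
    exists_ringHom_map_smul g (Subfield.closure_singleton_eq_top hp hcard hp' hprim hp'p u hu) huv
  have hσe : σ^[p' ^ e] = id := funext fun c => by
    obtain ⟨x, hx⟩ := exists_ne (0 : V)
    refine smul_left_injective K hx ?_
    simpa [hg] using (iterate_map_smul hσ (p' ^ e) c x).symm
  let τ : RingAut K := RingEquiv.ofBijective σ (Finite.injective_iff_bijective.1 σ.injective)
  have hτ : τ = 1 := RingAut.eq_one_of_pow_prime_pow_eq_one hp hcard hp' hprim hp'p τ e
    (RingEquiv.ext fun c => by rw [RingAut.coe_pow]; exact congrFun hσe c)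
  rw [← hσu]
  exact RingEquiv.congr_fun hτ (u : K)

end PrimitivePrimeDivisor

section Sylow

variable {G : Type*} [Group G] [Finite G] {p : ℕ} [hp : Fact p.Prime]

theorem CommGroup.natCard_primaryComponent {A : Type*} [CommGroup A] [Finite A] :
    Nat.card (CommGroup.primaryComponent A p) = p ^ (Nat.card A).factorization p := by
  obtain ⟨S, hS⟩ := (CommGroup.primaryComponent.isPGroup (G := A) (p := p)).exists_le_sylow
  have hSle : (S : Subgroup A) ≤ CommGroup.primaryComponent A p := fun g hg =>
    CommGroup.mem_primaryComponent.2 <|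
      (S.isPGroup' ⟨g, hg⟩).imp fun _ hk => congrArg Subtype.val hk
  rw [le_antisymm hS hSle, S.card_eq_multiplicity]

theorem Subgroup.natCard_eq_of_natCard_centralizer {Z : Subgroup G}
    (hZ : Nat.card Z = p ^ (Nat.card (centralizer (Z : Set G))).factorization p)
    (hnorm : ∀ g ∈ normalizer (Z : Set G), (∃ k, g ^ p ^ k = 1) →
      g ∈ centralizer (Z : Set G)) :
    Nat.card Z = p ^ (Nat.card G).factorization p := by
  set n := (Nat.card (centralizer (Z : Set G))).factorization p
  have hle : n ≤ (Nat.card G).factorization p :=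
    (hp.out.pow_dvd_iff_le_factorization Nat.card_pos.ne').1 (hZ ▸ Z.card_subgroup_dvd_card)
  suffices hlt : ¬ n < (Nat.card G).factorization p by rw [hZ, le_antisymm hle (not_lt.1 hlt)]
  intro hlt
  have hdvd : p ^ (n + 1) ∣ Nat.card G :=
    (hp.out.pow_dvd_iff_le_factorization Nat.card_pos.ne').2 hlt
  obtain ⟨P, hP⟩ :=
    Sylow.exists_subgroup_card_pow_prime p (Sylow.prime_pow_dvd_card_normalizer hdvd hZ)
  have hPC : P.map (normalizer (Z : Set G)).subtype ≤ centralizer (Z : Set G) := by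
    rintro _ ⟨x, hx, rfl⟩
    obtain ⟨k, hk⟩ := IsPGroup.of_card hP ⟨x, hx⟩
    exact hnorm x x.2
      ⟨k, congrArg (fun y => ((y : normalizer (Z : Set G)) : G)) (congrArg Subtype.val hk)⟩
  have hPdvd := Subgroup.card_dvd_of_le hPC
  rw [card_map_of_injective (subtype_injective _), hP,
    hp.out.pow_dvd_iff_le_factorization Nat.card_pos.ne'] at hPdvd
  omega

theorem Subgroup.natCard_eq_of_natCard_inf_centralizer {A Z : Subgroup G} (hZA : Z ≤ A)
    (hZ : Nat.card Z = p ^ (Nat.card ↥(A ⊓ centralizer (Z : Set G))).factorization p)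
    (hnorm : ∀ g ∈ A, g ∈ normalizer (Z : Set G) → (∃ k, g ^ p ^ k = 1) →
      g ∈ centralizer (Z : Set G)) :
    Nat.card Z = p ^ (Nat.card A).factorization p := by
  have hcardZ : Nat.card (Z.subgroupOf A) = Nat.card Z :=
    Nat.card_congr (subgroupOfEquivOfLe hZA).toEquiv
  have hcent : centralizer (Z.subgroupOf A : Set A) = (centralizer (Z : Set G)).subgroupOf A := by
    ext g
    simp only [mem_centralizer_iff, mem_subgroupOf, SetLike.mem_coe, Subtype.forall]
    exact ⟨fun h a ha => congrArg Subtype.val (h a (hZA ha) ha),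
      fun h a _ ha => Subtype.ext (h a ha)⟩
  have hcardC : Nat.card (centralizer (Z.subgroupOf A : Set A)) =
      Nat.card ↥(A ⊓ centralizer (Z : Set G)) := by
    rw [hcent, ← inf_subgroupOf_left]
    exact Nat.card_congr (subgroupOfEquivOfLe inf_le_left).toEquiv
  rw [← hcardZ]
  refine natCard_eq_of_natCard_centralizer (by rw [hcardZ, hcardC, hZ]) ?_
  rintro g hgN ⟨k, hk⟩
  rw [← subgroupOf_normalizer_eq hZA] at hgN
  rw [hcent]
  exact hnorm g g.2 hgN ⟨k, congrArg Subtype.val hk⟩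

end Sylow

theorem addAutGroupOld_mul_apply {A : Type} [Add A] (f g : AddAut A) (x : A) :
    (f * g) x = f (g x) := rfl

theorem addAutGroupOld_coe_pow {A : Type} [Add A] (f : AddAut A) (n : ℕ) :
    ⇑(f ^ n) = (⇑f)^[n] := by
  induction n with
  | zero => rfl
  | succ n ih => ext x; rw [pow_succ, addAutGroupOld_mul_apply, ih, Function.iterate_succ_apply]

def autSubgroup (K : Type) [Field K] (s : K × K → K × K → K × K) :
    Subgroup (AddAut (K × K) × AddAut (K × K) × AddAut (K × K)) where
  carrier := autSet K s
  one_mem' _ _ := rfl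
  mul_mem' {a b} ha hb z w := by
    simp only [Prod.fst_mul, Prod.snd_mul, addAutGroupOld_mul_apply, hb z w, ha (b.2.1 z) (b.2.2 w)]
  inv_mem' {a} ha z w := by
    have h := ha (a.2.1.symm z) (a.2.2.symm w)
    rw [a.2.1.apply_symm_apply, a.2.2.apply_symm_apply] at h
    rw [← h]
    exact a.1.symm_apply_apply _

section Gamma

variable (K : Type) [Field K] (q r : ℕ)

theorem gammaTriple_fst_apply (u : Kˣ) (z : K × K) :
    (gammaTriple K q r u).1 z = ((u : K) ^ (q + 1) * z.1, (u : K) ^ (r + 1) * z.2) := by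
  change (((u ^ (q + 1) : Kˣ) : K) * z.1, ((u ^ (r + 1) : Kˣ) : K) * z.2) = _
  push_cast
  rfl

theorem gammaTriple_snd_fst_apply (u : Kˣ) (z : K × K) :
    (gammaTriple K q r u).2.1 z = (u : K) • z := rfl

theorem gammaTriple_snd_snd_apply (u : Kˣ) (z : K × K) :
    (gammaTriple K q r u).2.2 z = (u : K) • z := rfl

theorem gammaTriple_mul (u v : Kˣ) :
    gammaTriple K q r (u * v) = gammaTriple K q r u * gammaTriple K q r v := by
  refine Prod.ext ?_ (Prod.ext ?_ ?_) <;> ext z <;>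
    simp only [Prod.fst_mul, Prod.snd_mul, addAutGroupOld_mul_apply, gammaTriple_fst_apply,
      gammaTriple_snd_fst_apply, gammaTriple_snd_snd_apply, Units.val_mul, mul_pow, mul_smul,
      mul_assoc]

noncomputable def gammaHom : Kˣ →* AddAut (K × K) × AddAut (K × K) × AddAut (K × K) :=
  MonoidHom.mk' (gammaTriple K q r) (gammaTriple_mul K q r)

theorem gammaHom_apply (u : Kˣ) : gammaHom K q r u = gammaTriple K q r u := rfl

theorem gammaHom_injective : Function.Injective (gammaHom K q r) := fun u v h => Units.ext <| by
  simpa [gammaHom_apply, gammaTriple_snd_fst_apply] using congrArg (fun γ => (γ.2.1 (1, 0)).1) h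

theorem natCard_range_gammaHom : Nat.card (gammaHom K q r).range = Nat.card Kˣ :=
  (Nat.card_congr (MonoidHom.ofInjective (gammaHom_injective K q r)).toEquiv).symm

theorem coe_range_gammaHom :
    ((gammaHom K q r).range : Set _) = {γ | ∃ u : Kˣ, γ = gammaTriple K q r u} := by
  ext
  simp only [MonoidHom.coe_range, Set.mem_range, gammaHom_apply, Set.mem_ofPred_eq, eq_comm]

variable (p' : ℕ) [Fact p'.Prime]

theorem coe_map_gammaHom_primaryComponent :
    ((CommGroup.primaryComponent Kˣ p').map (gammaHom K q r) : Set _) =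
      {γ | ∃ u : Kˣ, (∃ j : ℕ, orderOf u = p' ^ j) ∧ γ = gammaTriple K q r u} := by
  ext
  simp only [coe_map, Set.mem_image, SetLike.mem_coe, CommGroup.mem_primaryComponent_iff_orderOf,
    gammaHom_apply, Set.mem_ofPred_eq, eq_comm]

theorem coe_autSubgroup_inf_centralizer_map_gammaHom (s : K × K → K × K → K × K) :
    ((autSubgroup K s ⊓
        centralizer ((CommGroup.primaryComponent Kˣ p').map (gammaHom K q r) : Set _) :
        Subgroup _) : Set _) =
      {γ ∈ autSet K s | ∀ δ, (∃ u : Kˣ, (∃ j : ℕ, orderOf u = p' ^ j) ∧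
          δ = gammaTriple K q r u) → γ * δ = δ * γ} := by
  ext g
  simp only [coe_inf, Set.mem_inter_iff, SetLike.mem_coe, mem_centralizer_iff, Set.mem_ofPred_eq]
  refine and_congr Iff.rfl (forall_congr' fun δ => ?_)
  rw [← SetLike.mem_coe, coe_map_gammaHom_primaryComponent]
  exact imp_congr_right fun _ => eq_comm

end Gamma

theorem mem_centralizer_of_mem_normalizer_map_gammaHom {K : Type} [Field K] [Fintype K]
    {p m p' : ℕ} (hp : p.Prime) (hcard : Fintype.card K = p ^ m) (hp' : p'.Prime)
    (hprim : ∀ i : ℕ, 1 ≤ i → i ≤ m - 1 → ¬ p' ∣ p ^ i - 1) (hp'p : ¬ p' ∣ p) (q r : ℕ)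
    {g : AddAut (K × K) × AddAut (K × K) × AddAut (K × K)} (e : ℕ) (hg : g ^ p' ^ e = 1)
    (hgN : g ∈ normalizer ((CommGroup.primaryComponent Kˣ p').map (gammaHom K q r) : Set _)) :
    g ∈ centralizer ((CommGroup.primaryComponent Kˣ p').map (gammaHom K q r) : Set _) := by
  have : Fact p'.Prime := ⟨hp'⟩
  rw [mem_centralizer_iff]
  rintro _ ⟨u, hu, rfl⟩
  obtain ⟨j, hj⟩ := CommGroup.mem_primaryComponent_iff_orderOf.1 hu
  rcases j.eq_zero_or_pos with rfl | hj0
  · obtain rfl : u = 1 := orderOf_eq_one_iff.1 (by rw [hj, pow_zero])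
    rw [map_one, one_mul, mul_one]
  obtain ⟨v, -, hv⟩ := (mem_normalizer_iff.1 hgN _).1 ⟨u, hu, rfl⟩
  have hconj : g * gammaHom K q r u = gammaHom K q r v * g := (mul_inv_eq_iff_eq_mul.1 hv.symm)
  have hL : ∀ z, g.2.1 ((u : K) • z) = (v : K) • g.2.1 z := fun z => by
    simpa only [Prod.snd_mul, Prod.fst_mul, addAutGroupOld_mul_apply, gammaHom_apply,
      gammaTriple_snd_fst_apply] using congrArg (fun t => t.2.1 z) hconj
  have hg₂ : (⇑g.2.1)^[p' ^ e] = id := by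
    have h : g.2.1 ^ p' ^ e = 1 := by simpa using congrArg (fun t => t.2.1) hg
    rw [← addAutGroupOld_coe_pow, h]
    rfl
  have hvu : v = u := Units.ext <| eq_of_map_smul_eq_smul_map hp hcard hp' hprim hp'p g.2.1 e hg₂
    u (hj ▸ dvd_pow_self p' hj0.ne') hL
  rw [hconj, hvu]

theorem stmt_10_general (p m p' k l : ℕ) (hp : Nat.Prime p) (hm : 2 < m)
    (K : Type) [Field K] [Fintype K] (hcard : Fintype.card K = p ^ m)
    (hp' : Nat.Prime p') (hdvd : p' ∣ p ^ m - 1)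
    (hprim : ∀ i : ℕ, 1 ≤ i → i ≤ m - 1 → ¬ p' ∣ p ^ i - 1)
    (a₀ b₀ c₀ d₀ a₁ b₁ c₁ d₁ : K)
    -- Condition (C): `Z^{(q,r)} ≤ C_P` with index `I` not divisible by `p'`
    (hZC : {γ | ∃ u : Kˣ, γ = gammaTriple K (p ^ k) (p ^ l) u} ⊆
        {γ ∈ autSet K (bstar K (p ^ k) (p ^ l) a₀ b₀ c₀ d₀ a₁ b₁ c₁ d₁) |
          ∀ δ, (∃ u : Kˣ, (∃ j : ℕ, orderOf u = p' ^ j) ∧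
                δ = gammaTriple K (p ^ k) (p ^ l) u) → γ * δ = δ * γ})
    (hI : ∃ I : ℕ, ¬ p' ∣ I ∧
      Nat.card {γ ∈ autSet K (bstar K (p ^ k) (p ^ l) a₀ b₀ c₀ d₀ a₁ b₁ c₁ d₁) |
          ∀ δ, (∃ u : Kˣ, (∃ j : ℕ, orderOf u = p' ^ j) ∧
                δ = gammaTriple K (p ^ k) (p ^ l) u) → γ * δ = δ * γ}
        = I * Nat.card {γ | ∃ u : Kˣ, γ = gammaTriple K (p ^ k) (p ^ l) u}) :
    {γ | ∃ u : Kˣ, (∃ j : ℕ, orderOf u = p' ^ j) ∧ γ = gammaTriple K (p ^ k) (p ^ l) u} ⊆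
        autSet K (bstar K (p ^ k) (p ^ l) a₀ b₀ c₀ d₀ a₁ b₁ c₁ d₁)
      ∧ (∃ H : Subgroup (AddAut (K × K) × AddAut (K × K) × AddAut (K × K)),
          (H : Set (AddAut (K × K) × AddAut (K × K) × AddAut (K × K)))
            = {γ | ∃ u : Kˣ, (∃ j : ℕ, orderOf u = p' ^ j) ∧
                γ = gammaTriple K (p ^ k) (p ^ l) u})
      ∧ Nat.card {γ | ∃ u : Kˣ, (∃ j : ℕ, orderOf u = p' ^ j) ∧
            γ = gammaTriple K (p ^ k) (p ^ l) u}
          = p' ^ ((Nat.card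
              (autSet K (bstar K (p ^ k) (p ^ l) a₀ b₀ c₀ d₀ a₁ b₁ c₁ d₁))).factorization p') := by
  have : Fact p'.Prime := ⟨hp'⟩
  have hp'p : ¬ p' ∣ p :=
    Nat.not_dvd_of_dvd_pow_sub_one hp.ne_zero hp'.one_lt.ne' (by omega) hdvd
  set Zr := (CommGroup.primaryComponent Kˣ p').map (gammaHom K (p ^ k) (p ^ l))
  set A := autSubgroup K (bstar K (p ^ k) (p ^ l) a₀ b₀ c₀ d₀ a₁ b₁ c₁ d₁)
  have hZrA : Zr ≤ A := map_le_iff_le_comap.2 fun u _ => (hZC ⟨u, rfl⟩).1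
  obtain ⟨I, hI, hcardC⟩ := hI
  rw [← coe_autSubgroup_inf_centralizer_map_gammaHom, ← coe_range_gammaHom] at hcardC
  replace hcardC : Nat.card ↥(A ⊓ centralizer (Zr : Set _)) = I * Nat.card Kˣ :=
    natCard_range_gammaHom K _ _ ▸ hcardC
  rw [← coe_map_gammaHom_primaryComponent]
  refine ⟨fun _ hx => hZrA hx, ⟨Zr, rfl⟩, ?_⟩
  change Nat.card Zr = p' ^ (Nat.card A).factorization p'
  refine natCard_eq_of_natCard_inf_centralizer hZrA ?_ fun g _ hgN ⟨e, he⟩ =>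
    mem_centralizer_of_mem_normalizer_map_gammaHom hp hcard hp' hprim hp'p _ _ e he hgN
  rw [hcardC, card_map_of_injective (gammaHom_injective K _ _), CommGroup.natCard_primaryComponent,
    Nat.factorization_mul_of_not_dvd hI Nat.card_pos.ne']

/-- If `∗` is a `(q,r)`-biprojective pre-semifield multiplication and the
centralizer `C_P` of `Z_R^{(q,r)}` in `Aut(∗)` contains `Z^{(q,r)}` with index
prime to `p'`, then `Z_R^{(q,r)}` is a Sylow `p'`-subgroup of `Aut(∗)`:
it is a subgroup contained in `Aut(∗)` whose order is the full `p'`-part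
of `|Aut(∗)|`. -/
theorem stmt_10 (p m p' k l : ℕ) (hp : Nat.Prime p) (hp2 : p ≠ 2) (hm : 2 < m)
    (K : Type) [Field K] [Fintype K] (hcard : Fintype.card K = p ^ m)
    (hk : k < m) (hl : l < m)
    (hp' : Nat.Prime p') (hdvd : p' ∣ p ^ m - 1)
    (hprim : ∀ i : ℕ, 1 ≤ i → i ≤ m - 1 → ¬ p' ∣ p ^ i - 1)
    (a₀ b₀ c₀ d₀ a₁ b₁ c₁ d₁ : K)
    (hsf : ∀ z w : K × K,
      bstar K (p ^ k) (p ^ l) a₀ b₀ c₀ d₀ a₁ b₁ c₁ d₁ z w = 0 → z = 0 ∨ w = 0)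
    -- Condition (C): `Z^{(q,r)} ≤ C_P` with index `I` not divisible by `p'`
    (hZC : {γ | ∃ u : Kˣ, γ = gammaTriple K (p ^ k) (p ^ l) u} ⊆
        {γ ∈ autSet K (bstar K (p ^ k) (p ^ l) a₀ b₀ c₀ d₀ a₁ b₁ c₁ d₁) |
          ∀ δ, (∃ u : Kˣ, (∃ j : ℕ, orderOf u = p' ^ j) ∧
                δ = gammaTriple K (p ^ k) (p ^ l) u) → γ * δ = δ * γ})
    (hI : ∃ I : ℕ, ¬ p' ∣ I ∧
      Nat.card {γ ∈ autSet K (bstar K (p ^ k) (p ^ l) a₀ b₀ c₀ d₀ a₁ b₁ c₁ d₁) |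
          ∀ δ, (∃ u : Kˣ, (∃ j : ℕ, orderOf u = p' ^ j) ∧
                δ = gammaTriple K (p ^ k) (p ^ l) u) → γ * δ = δ * γ}
        = I * Nat.card {γ | ∃ u : Kˣ, γ = gammaTriple K (p ^ k) (p ^ l) u}) :
    {γ | ∃ u : Kˣ, (∃ j : ℕ, orderOf u = p' ^ j) ∧ γ = gammaTriple K (p ^ k) (p ^ l) u} ⊆
        autSet K (bstar K (p ^ k) (p ^ l) a₀ b₀ c₀ d₀ a₁ b₁ c₁ d₁)
      ∧ (∃ H : Subgroup (AddAut (K × K) × AddAut (K × K) × AddAut (K × K)),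
          (H : Set (AddAut (K × K) × AddAut (K × K) × AddAut (K × K)))
            = {γ | ∃ u : Kˣ, (∃ j : ℕ, orderOf u = p' ^ j) ∧
                γ = gammaTriple K (p ^ k) (p ^ l) u})
      ∧ Nat.card {γ | ∃ u : Kˣ, (∃ j : ℕ, orderOf u = p' ^ j) ∧
            γ = gammaTriple K (p ^ k) (p ^ l) u}
          = p' ^ ((Nat.card
              (autSet K (bstar K (p ^ k) (p ^ l) a₀ b₀ c₀ d₀ a₁ b₁ c₁ d₁))).factorization p') :=
  stmt_10_general p m p' k l hp hm K hcard hp' hdvd hprim a₀ b₀ c₀ d₀ a₁ b₁ c₁ d₁ hZC hI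
end

section
/- The family-S pre-semifield P_{q,B,a} is strongly isotopic to P_{q̄,B,a′}, where q̄ = p^{m−k} and a′ = B^{Q+1}/a; that is, there exist 𝔽_p-linear bijections N and L of M × M such that N((x,y) ∗₁ (u,v)) = L(x,y) ∗₂ L(u,v) for all (x,y),(u,v) ∈ M × M, where ∗₁ is the multiplication of P_{q,B,a} and ∗₂ that of P_{q̄,B,B^{Q+1}/a}. -/
/-- The family-`S` pre-semifield multiplication `P_{q,B,a}` on `M × M` (with `A = a/B`):
`(x,y) ∗ (u,v) = (x^q u + x u^q + B(y^q v + y v^q), x^r v + y u^r + A(x v^r + y^r u))`. -/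
def sstar (K : Type) [Field K] (q r : ℕ) (B A : K) (z w : K × K) : K × K :=
  (z.1 ^ q * w.1 + z.1 * w.1 ^ q + B * (z.2 ^ q * w.2 + z.2 * w.2 ^ q),
   z.1 ^ r * w.2 + z.2 * w.1 ^ r + A * (z.1 * w.2 ^ r + z.2 ^ r * w.1))

/-- `P_{q,B,a}` is strongly isotopic to `P_{q̄,B,a′}` with `q̄ = p^{m-k}` and
`a′ = B^{Q+1}/a`: there are additive (= `𝔽_p`-linear) bijections `N, L` of `M × M`
with `N((x,y) ∗₁ (u,v)) = L(x,y) ∗₂ L(u,v)`. -/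
theorem stmt_14 (p m k : ℕ) (hp : Nat.Prime p) (hp2 : p ≠ 2)
    (hm : 2 < m) (hmeven : Even m)
    (K : Type) [Field K] [Fintype K] (hcard : Fintype.card K = p ^ m)
    (hk1 : 1 ≤ k) (hk2 : k ≤ m - 1) (hodd : Odd (m / Nat.gcd k m))
    (a B : K) (ha0 : a ≠ 0) (haQ : a ^ p ^ (m / 2) = a)
    (hB0 : B ≠ 0) (hB : ¬ ∃ c : K, c ^ 2 = B) :
    ∃ N L : K × K ≃+ K × K, ∀ z w : K × K,
      N (sstar K (p ^ k) (p ^ (k + m / 2)) B (a / B) z w)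
        = sstar K (p ^ (m - k)) (p ^ ((m - k + m / 2) % m)) B
            ((B ^ (p ^ (m / 2) + 1) / a) / B) (L z) (L w) := by
  haveI : Fact p.Prime := ⟨hp⟩
  -- the characteristic of `K` is `p`
  haveI hchar : CharP K p := by
    obtain ⟨n, hcprime, hcn⟩ := FiniteField.card K (ringChar K)
    have hdvd : ringChar K ∣ p ^ m := by
      rw [← hcard, hcn]; exact dvd_pow_self _ (by positivity)
    have : ringChar K = p :=
      (Nat.prime_dvd_prime_iff_eq hcprime hp).mp (hcprime.dvd_of_dvd_pow hdvd)
    rw [← this]; infer_instance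
  -- Frobenius-type additive equivalences `x ↦ x ^ p ^ j`
  have hinj : ∀ j : ℕ, Function.Injective (fun x : K => x ^ p ^ j) := by
    intro j x y hxy
    have h0 : (x - y) ^ p ^ j = 0 := by
      rw [sub_pow_char_pow]; simpa [sub_eq_zero] using hxy
    exact sub_eq_zero.mp (pow_eq_zero_iff (pow_pos hp.pos j).ne' |>.mp h0)
  let F : ℕ → (K ≃+ K) := fun j =>
    { toEquiv := Equiv.ofBijective _ ((Finite.injective_iff_bijective).mp (hinj j))
      map_add' := fun x y => add_pow_char_pow x y p j }
  have hF : ∀ (j : ℕ) (x : K), F j x = x ^ p ^ j := fun j x => rfl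
  -- the nonzero multiplier
  set c : K := B ^ (p ^ (m / 2) + 1) / a / B with hc_def
  have hc0 : c ≠ 0 := div_ne_zero (div_ne_zero (pow_ne_zero _ hB0) ha0) hB0
  let Mc : K ≃+ K :=
    { toFun := fun x => c * x
      invFun := fun x => c⁻¹ * x
      left_inv := fun x => by field_simp
      right_inv := fun x => by field_simp
      map_add' := fun x y => mul_add c x y }
  refine ⟨(AddEquiv.refl K).prodCongr ((F (m / 2)).trans Mc),
    (F k).prodCongr (F k), ?_⟩
  -- power arithmetic in K
  have hm0 : 0 < m := by omega
  have hpow_card : ∀ x : K, x ^ p ^ m = x := fun x => by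
    rw [← hcard]; exact FiniteField.pow_card x
  have hbase : ∀ (x : K) (n : ℕ), x ^ (p ^ m) ^ n = x := by
    intro x n
    induction n with
    | zero => simp
    | succ i ih => rw [pow_succ, pow_mul, ih, hpow_card]
  have hmod : ∀ (x : K) (i : ℕ), x ^ p ^ i = x ^ p ^ (i % m) := by
    intro x i
    conv_lhs => rw [← Nat.mod_add_div i m, pow_add, pow_mul, pow_mul, hbase]
  have hcomp : ∀ (x : K) (i j : ℕ), (x ^ p ^ i) ^ p ^ j = x ^ p ^ (i + j) := by
    intro x i j; rw [← pow_mul, ← pow_add]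
  -- four exponent identities
  have e1 : ∀ x : K, (x ^ p ^ k) ^ p ^ (m - k) = x := by
    intro x
    rw [hcomp]
    have : k + (m - k) = m := by omega
    rw [this, hpow_card]
  have e2 : ∀ x : K, (x ^ p ^ k) ^ p ^ ((m - k + m / 2) % m) = x ^ p ^ (m / 2) := by
    intro x
    rw [hcomp, hmod]
    congr 2
    rw [Nat.add_mod_mod]
    have h1 : k + (m - k + m / 2) = m + m / 2 := by omega
    rw [h1, Nat.add_mod_left, Nat.mod_eq_of_lt (by omega)]
  have e3 : ∀ x : K, (x ^ p ^ (k + m / 2)) ^ p ^ (m / 2) = x ^ p ^ k := by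
    intro x
    rw [hcomp]
    have h1 : k + m / 2 + m / 2 = k + m := by
      obtain ⟨t, rfl⟩ := hmeven; omega
    rw [h1, pow_add, pow_mul, hpow_card]
  have hL : ∀ s t : K, ((F k).prodCongr (F k)) (s, t) = (s ^ p ^ k, t ^ p ^ k) :=
    fun s t => rfl
  have hN : ∀ s t : K, ((AddEquiv.refl K).prodCongr ((F (m / 2)).trans Mc)) (s, t)
      = (s, c * t ^ p ^ (m / 2)) := fun s t => rfl
  intro z w
  obtain ⟨x, y⟩ := z
  obtain ⟨u, v⟩ := w
  simp only [sstar]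
  rw [hN, hL, hL]
  dsimp only
  rw [Prod.mk.injEq]
  constructor
  · -- first coordinates
    rw [e1, e1, e1, e1]; ring
  · -- second coordinates
    rw [e2, e2, e2, e2]
    rw [add_pow_char_pow, add_pow_char_pow, mul_pow, mul_pow, mul_pow, add_pow_char_pow,
      mul_pow, mul_pow, div_pow, haQ, e3, e3, e3, e3]
    rw [hc_def]
    have hBQpow : B ^ (p ^ (m / 2) + 1) = B ^ p ^ (m / 2) * B := by rw [pow_succ]
    rw [hBQpow]
    field_simp
    ring
end

section
/- For every admissible q, every pair of non-squares B, B′ ∈ M^×, and every a ∈ M^× with a^Q = a, there exists a′ ∈ M^× with (a′)^Q = a′ such that the family-S pre-semifields P_{q,B,a} and P_{q,B′,a′} are strongly isotopic. -/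
/-!
The substitution `(x, y) ↦ (t x, y)` multiplies the first coordinate of `P_{q,B,a}` by `t^(q+1)`
once `B` is replaced by `t^(q+1) B`, and the second by `t^r` once `a` is replaced by
`a' = a t^q (t^q)^Q = a t^(q+r)`, which is again fixed by `x ↦ x^Q` because `x^(Q^2) = x` in `M`.
So it suffices to write `B'/B` as a `(q+1)`-th power. It is a square, being a quotient of two
non-squares, and every square of `M^×` is a `(q+1)`-th power because
`gcd(q + 1, p^m - 1) = 2` when `m / gcd(k, m)` is odd.
-/

theorem Nat.gcd_pow_add_one_pow_sub_one {p k m : ℕ} (hp : Odd p) (hm : Odd (m / k.gcd m)) :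
    (p ^ k + 1).gcd (p ^ m - 1) = 2 := by
  set g := (p ^ k + 1).gcd (p ^ m - 1)
  have hk : (p : ZMod g) ^ k = -1 := by
    have h := (ZMod.natCast_eq_zero_iff (p ^ k + 1) g).2 (Nat.gcd_dvd_left _ _)
    push_cast at h
    exact eq_neg_of_add_eq_zero_left h
  have hm1 : (p : ZMod g) ^ m = 1 := by
    have h := (ZMod.natCast_eq_zero_iff (p ^ m - 1) g).2 (Nat.gcd_dvd_right _ _)
    rwa [Nat.cast_sub (Nat.one_le_pow _ _ hp.pos), sub_eq_zero, Nat.cast_pow, Nat.cast_one] at h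
  have hexp : k * (m / k.gcd m) = m * (k / k.gcd m) := by
    rw [← Nat.mul_div_assoc _ (Nat.gcd_dvd_right k m), ← Nat.mul_div_assoc _ (Nat.gcd_dvd_left k m),
      mul_comm]
  -- `p ^ (k * (m / gcd k m))` is `(-1) ^ odd = -1` and also a power of `p ^ m = 1`.
  have h2 : ((2 : ℕ) : ZMod g) = 0 :=
    calc ((2 : ℕ) : ZMod g) = 1 - (-1) := by norm_num
      _ = (p : ZMod g) ^ (m * (k / k.gcd m)) - (p : ZMod g) ^ (k * (m / k.gcd m)) := by
        rw [pow_mul, pow_mul, hk, hm1, one_pow, hm.neg_one_pow]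
      _ = 0 := by rw [hexp, sub_self]
  refine Nat.dvd_antisymm ((ZMod.natCast_eq_zero_iff 2 g).1 h2) (Nat.dvd_gcd ?_ ?_)
  · exact hp.pow.add_one.two_dvd
  · exact (Nat.Odd.sub_odd hp.pow odd_one).two_dvd

theorem exists_pow_eq_pow_gcd_card {G : Type*} [Group G] [Fintype G] (d : ℕ) (x : G) :
    ∃ y : G, y ^ d = x ^ d.gcd (Fintype.card G) := by
  refine ⟨x ^ d.gcdA (Fintype.card G), ?_⟩
  rw [← zpow_natCast, ← zpow_mul, ← zpow_natCast x, Nat.gcd_eq_gcd_ab, zpow_add,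
    zpow_mul x (Fintype.card G : ℤ), zpow_natCast x (Fintype.card G), pow_card_eq_one, one_zpow,
    mul_one, mul_comm]

theorem FiniteField.exists_pow_eq_of_isSquare {K : Type*} [Field K] [Fintype K] {d : ℕ}
    (hd : d.gcd (Fintype.card K - 1) = 2) {c : K} (hc : IsSquare c) (hc0 : c ≠ 0) :
    ∃ t : K, t ≠ 0 ∧ t ^ d = c := by
  classical
  obtain ⟨s, rfl⟩ := hc
  obtain ⟨y, hy⟩ := exists_pow_eq_pow_gcd_card d (Units.mk0 s (left_ne_zero_of_mul hc0))
  rw [Fintype.card_units, hd] at hy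
  exact ⟨y, y.ne_zero, by simpa [sq] using congrArg Units.val hy⟩

theorem FiniteField.isSquare_div_of_not_isSquare {K : Type*} [Field K] [Fintype K]
    {a b : K} (ha : ¬IsSquare a) (hb : ¬IsSquare b) : IsSquare (a / b) := by
  classical
  have hb0 : b ≠ 0 := by rintro rfl; exact hb IsSquare.zero
  have hab : IsSquare (a * b) := by
    refine (quadraticChar_one_iff_isSquare (mul_ne_zero ?_ hb0)).1 ?_
    · rintro rfl; exact ha IsSquare.zero
    · rw [map_mul, quadraticChar_neg_one_iff_not_isSquare.2 ha,
        quadraticChar_neg_one_iff_not_isSquare.2 hb]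
      norm_num
  rw [show a / b = a * b / (b * b) by field_simp]
  exact hab.div ⟨b, rfl⟩

theorem mul_pow_self_pow_eq_of_pow_mul_self_eq {M : Type*} [CommMonoid M] {Q : ℕ} {x : M}
    (hx : x ^ (Q * Q) = x) : (x * x ^ Q) ^ Q = x * x ^ Q := by
  rw [mul_pow, ← pow_mul, hx, mul_comm]

theorem exists_sstar_isotopism {K : Type} [Field K] (q r : ℕ) {B B' A A' t : K} (ht : t ≠ 0)
    (hB : B' = t ^ (q + 1) * B) (hA : A' * t = t ^ r * A) :
    ∃ N L : K × K ≃+ K × K, ∀ z w : K × K,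
      N (sstar K q r B A z w) = sstar K q r B' A' (L z) (L w) := by
  refine ⟨(DistribMulAction.toAddEquiv₀ K (t ^ (q + 1)) (pow_ne_zero _ ht)).prodCongr
      (DistribMulAction.toAddEquiv₀ K (t ^ r) (pow_ne_zero _ ht)),
    (DistribMulAction.toAddEquiv₀ K t ht).prodCongr (AddEquiv.refl K), ?_⟩
  rintro ⟨x, y⟩ ⟨u, v⟩
  change (t ^ (q + 1) * _, t ^ r * _) = sstar K q r B' A' (t * x, y) (t * u, v)
  subst hB
  simp only [sstar, Prod.mk.injEq]
  constructor
  · ring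
  · linear_combination (x * v ^ r + y ^ r * u) * hA.symm

theorem stmt_15_general (p m k : ℕ) (hp : Nat.Prime p) (hp2 : p ≠ 2)
    (hmeven : Even m)
    (K : Type) [Field K] [Fintype K] (hcard : Fintype.card K = p ^ m)
    (hodd : Odd (m / Nat.gcd k m))
    (a B B' : K) (ha0 : a ≠ 0) (haQ : a ^ p ^ (m / 2) = a)
    (hB : ¬ ∃ c : K, c ^ 2 = B)
    (hB' : ¬ ∃ c : K, c ^ 2 = B') :
    ∃ a' : K, a' ≠ 0 ∧ a' ^ p ^ (m / 2) = a' ∧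
      ∃ N L : K × K ≃+ K × K, ∀ z w : K × K,
        N (sstar K (p ^ k) (p ^ (k + m / 2)) B (a / B) z w)
          = sstar K (p ^ k) (p ^ (k + m / 2)) B' (a' / B') (L z) (L w) := by
  have hpodd : Odd p := hp.odd_of_ne_two hp2
  have hBsq : ¬IsSquare B := fun ⟨c, hc⟩ => hB ⟨c, by rw [hc, sq]⟩
  have hB'sq : ¬IsSquare B' := fun ⟨c, hc⟩ => hB' ⟨c, by rw [hc, sq]⟩
  have hB0 : B ≠ 0 := by rintro rfl; exact hBsq IsSquare.zero
  have hB'0 : B' ≠ 0 := by rintro rfl; exact hB'sq IsSquare.zero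
  obtain ⟨t, ht0, ht⟩ := FiniteField.exists_pow_eq_of_isSquare (d := p ^ k + 1)
    (by rw [hcard]; exact Nat.gcd_pow_add_one_pow_sub_one hpodd hodd)
    (FiniteField.isSquare_div_of_not_isSquare hB'sq hBsq) (div_ne_zero hB'0 hB0)
  have hB'eq : B' = t ^ (p ^ k + 1) * B := by rw [ht, div_mul_cancel₀ _ hB0]
  have htQ : (t ^ p ^ k) ^ p ^ (m / 2) = t ^ p ^ (k + m / 2) := by rw [← pow_mul, ← pow_add]
  have htQQ : (t ^ p ^ k) ^ (p ^ (m / 2) * p ^ (m / 2)) = t ^ p ^ k := by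
    rw [← pow_add, ← two_mul, Nat.two_mul_div_two_of_even hmeven, ← hcard, FiniteField.pow_card]
  refine ⟨a * (t ^ p ^ k * (t ^ p ^ k) ^ p ^ (m / 2)), mul_ne_zero ha0 (by positivity),
    by rw [mul_pow, haQ, mul_pow_self_pow_eq_of_pow_mul_self_eq htQQ],
    exists_sstar_isotopism _ _ ht0 hB'eq ?_⟩
  rw [htQ, hB'eq]
  field_simp
  ring

/-- For admissible `q`, non-squares `B, B′` and `a ∈ 𝔽_Q^×`, there is
`a′ ∈ 𝔽_Q^×` such that `P_{q,B,a}` and `P_{q,B′,a′}` are strongly isotopic. -/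
theorem stmt_15 (p m k : ℕ) (hp : Nat.Prime p) (hp2 : p ≠ 2)
    (hm : 2 < m) (hmeven : Even m)
    (K : Type) [Field K] [Fintype K] (hcard : Fintype.card K = p ^ m)
    (hk1 : 1 ≤ k) (hk2 : k ≤ m - 1) (hodd : Odd (m / Nat.gcd k m))
    (a B B' : K) (ha0 : a ≠ 0) (haQ : a ^ p ^ (m / 2) = a)
    (hB0 : B ≠ 0) (hB : ¬ ∃ c : K, c ^ 2 = B)
    (hB'0 : B' ≠ 0) (hB' : ¬ ∃ c : K, c ^ 2 = B') :
    ∃ a' : K, a' ≠ 0 ∧ a' ^ p ^ (m / 2) = a' ∧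
      ∃ N L : K × K ≃+ K × K, ∀ z w : K × K,
        N (sstar K (p ^ k) (p ^ (k + m / 2)) B (a / B) z w)
          = sstar K (p ^ k) (p ^ (k + m / 2)) B' (a' / B') (L z) (L w) :=
  stmt_15_general p m k hp hp2 hmeven K hcard hodd a B B' ha0 haQ hB hB'
end

section
/- Let α ∈ M^× be a non-square and let ⋆ be the Zhou–Pott multiplication (x,y) ⋆ (u,v) = (x^q u + x u^q + α(y^q v + y v^q), x^{qQ} v + y u^{qQ}) on M × M. Then the family-S pre-semifield P_{q,B,a} is not isotopic to (M × M, +, ⋆): no triple (N,L,K) of 𝔽_p-linear bijections of M × M satisfies N((x,y) ∗ (u,v)) = L(x,y) ⋆ K(u,v) for all (x,y),(u,v). -/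
/-- The Zhou–Pott multiplication
`(x,y) ⋆ (u,v) = (x^q u + x u^q + α(y^q v + y v^q), x^{qQ} v + y u^{qQ})`,
where the exponent `r` plays the role of `qQ`. -/
def zpstar (K : Type) [Field K] (q r : ℕ) (α : K) (z w : K × K) : K × K :=
  (z.1 ^ q * w.1 + z.1 * w.1 ^ q + α * (z.2 ^ q * w.2 + z.2 * w.2 ^ q),
   z.1 ^ r * w.2 + z.2 * w.1 ^ r)

/-! Only the second coordinate of `N` matters. Every additive map of `M` is a linearized
polynomial `∑ cᵢ x^(p^i)`, so `(z, w) ↦ (N (z ∗ w)).2` has a Frobenius coefficient matrix, with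
rows indexed by the monomials of `z = (x, y)` and columns by those of `w = (u, v)`. The second
coordinate of `⋆` is `(L z)₁^r (K' w)₂ + (L z)₂ (K' w)₁^r`, so this matrix has rank at most two.
But the coefficients of `N` itself (not all zero, as `N` is onto) sit on the diagonals shifted by
`k` and `k + m/2`; since `k`, `2k` and `2k + m/2` are nonzero mod `m` (this is where `m / e` odd
enters), they produce a `3 × 3` minor which is a nonzero monomial. -/

open Finset

section FiniteField

variable {K : Type*} [Field K] [Fintype K] {p m : ℕ}

theorem pow_pow_mod (hcard : Fintype.card K = p ^ m) (x : K) (a : ℕ) :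
    x ^ p ^ (a % m) = x ^ p ^ a := by
  conv_rhs => rw [← Nat.mod_add_div a m, pow_add, pow_mul, pow_mul, ← hcard,
    FiniteField.pow_card_pow]

theorem pow_pow_pow_val_add [NeZero m] (hcard : Fintype.card K = p ^ m) (x : K) (n : ℕ)
    (i : ZMod m) :
    (x ^ p ^ n) ^ p ^ i.val = x ^ p ^ (i + n).val := by
  rw [← pow_mul, ← pow_add, ZMod.val_add, ZMod.val_natCast, Nat.add_mod_mod, add_comm,
    pow_pow_mod hcard]

variable [hp : Fact p.Prime]

theorem finrank_zmod_eq [Algebra (ZMod p) K] (hcard : Fintype.card K = p ^ m) :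
    Module.finrank (ZMod p) K = m := by
  have h := Module.card_eq_pow_finrank (K := ZMod p) (V := K)
  rw [ZMod.card, hcard] at h
  exact (Nat.pow_right_injective hp.out.two_le h).symm

theorem eq_of_forall_pow_pow_eq [CharP K p] (hcard : Fintype.card K = p ^ m) {i j : ℕ}
    (hi : i < m) (hj : j < m) (h : ∀ x : K, x ^ p ^ i = x ^ p ^ j) : i = j := by
  let _ := ZMod.algebra K p
  have hord : orderOf (FiniteField.frobeniusAlgHom (ZMod p) K) = m := by
    rw [FiniteField.orderOf_frobeniusAlgHom, finrank_zmod_eq hcard]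
  refine pow_injOn_Iio_orderOf (by rwa [hord]) (by rwa [hord]) (AlgHom.ext fun x => ?_)
  simpa [AlgHom.coe_pow, FiniteField.coe_frobeniusAlgHom, pow_iterate, ZMod.card] using h x

end FiniteField

section FrobeniusSums

variable {K : Type*} [Field K] {p m : ℕ}

variable (p) in
def shiftCoeff (ν : ZMod m → K) (d : ZMod m) (ε₁ ε₂ : K) (i j : ZMod m) : K :=
  (if i = j + d then ν j * ε₁ ^ p ^ j.val else 0) + (if j = i + d then ν i * ε₂ ^ p ^ i.val else 0)

variable [NeZero m]

variable (p) in
def frobSum (c : ZMod m → K) (x : K) : K :=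
  ∑ i, c i * x ^ p ^ i.val

variable (p) in
def frobSum₂ (C : ZMod m → ZMod m → K) (x u : K) : K :=
  ∑ i, ∑ j, C i j * (x ^ p ^ i.val * u ^ p ^ j.val)

@[simp]
theorem frobSum_zero_left (x : K) : frobSum p (0 : ZMod m → K) x = 0 := by
  simp [frobSum]

theorem frobSum₂_eq_frobSum_frobSum (C : ZMod m → ZMod m → K) (x u : K) :
    frobSum₂ p C x u = frobSum p (fun j => frobSum p (fun i => C i j) x) u := by
  simp only [frobSum₂, frobSum, sum_mul]
  rw [sum_comm]
  exact sum_congr rfl fun j _ => sum_congr rfl fun i _ => by ring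

theorem frobSum_mul_frobSum (P R : ZMod m → K) (x u : K) :
    frobSum p P x * frobSum p R u = frobSum₂ p (fun i j => P i * R j) x u := by
  rw [frobSum, frobSum, sum_mul_sum]
  exact sum_congr rfl fun i _ => sum_congr rfl fun j _ => by ring

variable [hp : Fact p.Prime]

@[simp]
theorem frobSum_zero_right (c : ZMod m → K) : frobSum p c 0 = 0 := by
  simp [frobSum, hp.out.ne_zero]

variable [CharP K p]

theorem frobSum_add (c : ZMod m → K) (x y : K) :
    frobSum p c (x + y) = frobSum p c x + frobSum p c y := by
  simp only [frobSum, add_pow_char_pow, mul_add, sum_add_distrib]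

variable [Fintype K]

theorem frobSum_injective (hcard : Fintype.card K = p ^ m) :
    Function.Injective (frobSum p : (ZMod m → K) → K → K) := by
  intro c d h
  have hinj : Function.Injective fun i : ZMod m => (powMonoidHom (p ^ i.val) : K →* K) :=
    fun i j hij => ZMod.val_injective m <| eq_of_forall_pow_pow_eq hcard (ZMod.val_lt i)
      (ZMod.val_lt j) fun x => DFunLike.congr_fun hij x
  funext i
  refine Fintype.linearIndependent_iffₛ.mp ((linearIndependent_monoidHom K K).comp _ hinj) c d
    (funext fun x => ?_) i
  simpa [frobSum] using congrFun h x

/-- `c ↦ frobSum p c` is injective, and both sides have `p ^ (m * m)` elements. -/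
theorem exists_frobSum_eq (hcard : Fintype.card K = p ^ m) (f : K →+ K) :
    ∃ c : ZMod m → K, ⇑f = frobSum p c := by
  let _ := ZMod.algebra K p
  let Φ : (ZMod m → K) → (K →+ K) := fun c => AddMonoidHom.mk' (frobSum p c) (frobSum_add c)
  have hinj : Function.Injective Φ :=
    fun c d h => frobSum_injective hcard (congrArg DFunLike.coe h)
  have : Finite (K →+ K) := Finite.of_injective _ DFunLike.coe_injective
  have hle : Nat.card (K →+ K) ≤ Nat.card (ZMod m → K) := by
    rw [Nat.card_congr (AddMonoidHom.toZModLinearMapEquiv p).toEquiv,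
      Module.natCard_eq_pow_finrank (K := ZMod p), Module.finrank_linearMap,
      finrank_zmod_eq hcard, Nat.card_fun, Nat.card_eq_fintype_card (α := K), hcard]
    simp only [Nat.card_zmod, pow_mul, le_refl]
  obtain ⟨c, hc⟩ := (hinj.bijective_of_nat_card_le hle).2 f
  exact ⟨c, by rw [← hc]; rfl⟩

theorem exists_frobSum_prod_eq (hcard : Fintype.card K = p ^ m) (f : K × K →+ K) :
    ∃ c c' : ZMod m → K, ∀ x y, f (x, y) = frobSum p c x + frobSum p c' y := by
  obtain ⟨c, hc⟩ := exists_frobSum_eq hcard (f.comp (AddMonoidHom.inl K K))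
  obtain ⟨c', hc'⟩ := exists_frobSum_eq hcard (f.comp (AddMonoidHom.inr K K))
  refine ⟨c, c', fun x y => ?_⟩
  rw [← congrFun hc, ← congrFun hc', AddMonoidHom.comp_apply, AddMonoidHom.comp_apply, ← map_add]
  simp

theorem frobSum₂_injective (hcard : Fintype.card K = p ^ m) :
    Function.Injective (frobSum₂ p : (ZMod m → ZMod m → K) → K → K → K) := by
  intro C D h
  have hcol : ∀ x,
      (fun j => frobSum p (fun i => C i j) x) = fun j => frobSum p (fun i => D i j) x :=
    fun x => frobSum_injective hcard <| funext fun u => by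
      simpa only [frobSum₂_eq_frobSum_frobSum] using congrFun (congrFun h x) u
  funext i j
  exact congrFun (frobSum_injective hcard (funext fun x => congrFun (hcol x) j)) i

theorem frobSum_shift (hcard : Fintype.card K = p ^ m) (ν : ZMod m → K) (n : ℕ) (ε₁ ε₂ x u : K) :
    frobSum p ν (ε₁ * x ^ p ^ n * u + ε₂ * x * u ^ p ^ n) =
      frobSum₂ p (shiftCoeff p ν n ε₁ ε₂) x u := by
  have h₁ : ∑ i, ∑ j, (if i = j + (n : ZMod m) then ν j * ε₁ ^ p ^ j.val else 0) *
      (x ^ p ^ i.val * u ^ p ^ j.val) =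
      ∑ j, ν j * ε₁ ^ p ^ j.val * (x ^ p ^ (j + n).val * u ^ p ^ j.val) := by
    rw [sum_comm]; simp [ite_mul]
  have h₂ : ∑ i, ∑ j, (if j = i + (n : ZMod m) then ν i * ε₂ ^ p ^ i.val else 0) *
      (x ^ p ^ i.val * u ^ p ^ j.val) =
      ∑ i, ν i * ε₂ ^ p ^ i.val * (x ^ p ^ i.val * u ^ p ^ (i + n).val) := by
    simp [ite_mul]
  simp only [frobSum₂, shiftCoeff, add_mul, sum_add_distrib]
  rw [h₁, h₂, frobSum, ← sum_add_distrib]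
  refine sum_congr rfl fun i _ => ?_
  simp only [add_pow_char_pow, mul_pow, pow_pow_pow_val_add hcard]
  ring

theorem mul_add_mul_eq_shiftCoeff (hcard : Fintype.card K = p ^ m) {ν P R S W : ZMod m → K}
    {n : ℕ} {ε₁ ε₂ : K}
    (h : ∀ x u, frobSum p ν (ε₁ * x ^ p ^ n * u + ε₂ * x * u ^ p ^ n) =
      frobSum p P x * frobSum p R u + frobSum p S x * frobSum p W u) (i j : ZMod m) :
    P i * R j + S i * W j = shiftCoeff p ν n ε₁ ε₂ i j := by
  have key : frobSum₂ p (fun i j => P i * R j + S i * W j) =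
      frobSum₂ p (shiftCoeff p ν n ε₁ ε₂) := by
    funext x u
    rw [← frobSum_shift hcard, h, frobSum_mul_frobSum, frobSum_mul_frobSum]
    simp only [frobSum₂, add_mul, sum_add_distrib]
  exact congrFun (congrFun (frobSum₂_injective hcard key) i) j

end FrobeniusSums

theorem det_vecMulVec_add_vecMulVec {R : Type*} [CommRing R] (a b c d : Fin 3 → R) :
    (Matrix.vecMulVec a c + Matrix.vecMulVec b d).det = 0 := by
  simp only [Matrix.det_fin_three, Matrix.add_apply, Matrix.vecMulVec_apply]
  ring

/-- The hypotheses `h₁`–`h₄` say that the four blocks of a coefficient matrix factor through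
`K²`; a nonzero coefficient of `ν` or `ν'` yields a `3 × 3` minor that is a nonzero monomial. -/
theorem false_of_shiftCoeff_blocks {K : Type*} [Field K] {p m : ℕ}
    {ν ν' P S P' S' R W R' W' : ZMod m → K} {σ h : ZMod m} {A B : K}
    (hσ : σ ≠ 0) (hσσ : σ + σ ≠ 0) (hh : h ≠ 0) (hhh : h + h = 0) (hσσh : σ + σ + h ≠ 0)
    (hA : A ≠ 0) (hB : B ≠ 0)
    (h₁ : ∀ i j, P i * R j + S i * W j = shiftCoeff p ν σ 1 1 i j)
    (h₂ : ∀ i j, P i * R' j + S i * W' j = shiftCoeff p ν' (σ + h) 1 A i j)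
    (h₃ : ∀ i j, P' i * R j + S' i * W j = shiftCoeff p ν' (σ + h) A 1 i j)
    (h₄ : ∀ i j, P' i * R' j + S' i * W' j = shiftCoeff p ν σ B B i j)
    (hν : ν ≠ 0 ∨ ν' ≠ 0) : False := by
  set τ := σ + h
  have hτ : τ ≠ 0 := fun h0 => hσσ (by linear_combination 2 * h0 - hhh)
  have hττ : τ + τ ≠ 0 := fun h0 => hσσ (by linear_combination h0 - hhh)
  have hστ : σ + τ ≠ 0 := by simpa only [τ, add_assoc] using hσσh
  have hτσ : τ ≠ σ := by simpa [τ] using hh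
  by_cases hν0 : ν = 0
  · obtain ⟨c, hc⟩ := Function.ne_iff.mp (hν.resolve_left (not_not.mpr hν0))
    have hdet := det_vecMulVec_add_vecMulVec ![P c, P (c + τ), P' c] ![S c, S (c + τ), S' c]
      ![R' (c + τ), R' c, R (c + τ)] ![W' (c + τ), W' c, W (c + τ)]
    exact hc (by simpa [Matrix.det_fin_three, h₁, h₂, h₃, h₄, shiftCoeff, add_assoc, hτ, hττ,
      hν0, hA] using hdet)
  · obtain ⟨c, hc⟩ := Function.ne_iff.mp hν0
    have hdet := det_vecMulVec_add_vecMulVec ![P c, P (c + σ), P' c] ![S c, S (c + σ), S' c]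
      ![R c, R (c + σ), R' (c + σ)] ![W c, W (c + σ), W' (c + σ)]
    exact hc (by simpa [Matrix.det_fin_three, h₁, h₂, h₃, h₄, shiftCoeff, add_assoc, hσ, hσσ, hτ,
      hστ, hτσ.symm, hB] using hdet)

theorem natCast_add_self_ne_zero {k m : ℕ} (hk : 0 < k) (hkm : k < m)
    (hodd : Odd (m / k.gcd m)) : (k : ZMod m) + k ≠ 0 := by
  rw [← Nat.cast_add, ← two_mul, Ne, ZMod.natCast_eq_zero_iff]
  rintro ⟨t, ht⟩
  obtain rfl : t = 1 := by
    have h2 : m * t < m * 2 := by omega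
    have : t ≠ 0 := by rintro rfl; omega
    have := Nat.lt_of_mul_lt_mul_left h2
    omega
  obtain rfl : m = k * 2 := by omega
  rw [Nat.gcd_mul_right_right, Nat.mul_div_cancel_left _ hk] at hodd
  exact (by decide : ¬ Odd 2) hodd

theorem natCast_half_add_self {m : ℕ} (hm : Even m) :
    ((m / 2 : ℕ) : ZMod m) + ((m / 2 : ℕ) : ZMod m) = 0 := by
  rw [← Nat.cast_add, ← two_mul, Nat.two_mul_div_two_of_even hm, ZMod.natCast_self]

theorem natCast_add_self_add_half_ne_zero {k m : ℕ} (hm : Even m) (hodd : Odd (m / k.gcd m)) :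
    (k : ZMod m) + k + ((m / 2 : ℕ) : ZMod m) ≠ 0 := by
  rw [← Nat.cast_add, ← Nat.cast_add, ← two_mul, Ne, ZMod.natCast_eq_zero_iff]
  rintro ⟨t, ht⟩
  have h4 : 4 * k + m = 2 * (m * t) := by
    have := Nat.div_two_mul_two_of_even hm
    omega
  set e := k.gcd m
  obtain ⟨k', hk'⟩ : e ∣ k := Nat.gcd_dvd_left k m
  obtain ⟨s, hs⟩ : e ∣ m := Nat.gcd_dvd_right k m
  have he : 0 < e := Nat.pos_of_ne_zero fun h => by simp [h] at hodd
  rw [hs, Nat.mul_div_cancel_left _ he] at hodd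
  rw [hk', hs] at h4
  have h5 : e * (4 * k' + s) = e * (2 * s * t) := by
    calc e * (4 * k' + s) = 4 * (e * k') + e * s := by ring
      _ = 2 * (e * s * t) := h4
      _ = e * (2 * s * t) := by ring
  have h6 := Nat.eq_of_mul_eq_mul_left he h5
  rw [mul_assoc] at h6
  obtain ⟨s', rfl⟩ := hodd
  omega

theorem stmt_19_general (p m k : ℕ) (hp : Nat.Prime p)
    (hmeven : Even m)
    (K : Type) [Field K] [Fintype K] (hcard : Fintype.card K = p ^ m)
    (hk1 : 1 ≤ k) (hk2 : k ≤ m - 1) (hodd : Odd (m / Nat.gcd k m))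
    (a B : K) (ha0 : a ≠ 0)
    (hB0 : B ≠ 0)
    (α : K) :
    ¬ ∃ N L K' : K × K ≃+ K × K, ∀ z w : K × K,
        N (sstar K (p ^ k) (p ^ (k + m / 2)) B (a / B) z w)
          = zpstar K (p ^ k) (p ^ (k + m / 2)) α (L z) (K' w) := by
  have : Fact p.Prime := ⟨hp⟩
  have : NeZero m := ⟨by omega⟩
  have : CharP K p := charP_of_card_eq_prime_pow hcard
  rintro ⟨N, L, K', hiso⟩
  let frobr : K →+ K := iterateFrobenius K p (k + m / 2)
  obtain ⟨ν, ν', hN⟩ := exists_frobSum_prod_eq hcard ((AddMonoidHom.snd K K).comp N)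
  obtain ⟨P, P', hP⟩ :=
    exists_frobSum_prod_eq hcard (frobr.comp ((AddMonoidHom.fst K K).comp L))
  obtain ⟨S, S', hS⟩ := exists_frobSum_prod_eq hcard ((AddMonoidHom.snd K K).comp L)
  obtain ⟨R, R', hR⟩ := exists_frobSum_prod_eq hcard ((AddMonoidHom.snd K K).comp K')
  obtain ⟨W, W', hW⟩ :=
    exists_frobSum_prod_eq hcard (frobr.comp ((AddMonoidHom.fst K K).comp K'))
  simp only [AddMonoidHom.comp_apply, frobr, AddMonoidHom.coe_coe, iterateFrobenius_def,
    AddMonoidHom.coe_fst, AddMonoidHom.coe_snd] at hN hP hS hR hW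
  have h₁ := mul_add_mul_eq_shiftCoeff hcard (n := k) (ε₁ := 1) (ε₂ := 1) fun x u => by
    simpa [sstar, zpstar, hN, hP, hS, hR, hW, hp.ne_zero]
      using congrArg Prod.snd (hiso (x, 0) (u, 0))
  have h₂ := mul_add_mul_eq_shiftCoeff hcard (n := k + m / 2) (ε₁ := 1) (ε₂ := a / B)
    fun x v => by
      simpa [sstar, zpstar, hN, hP, hS, hR, hW, hp.ne_zero, mul_assoc]
        using congrArg Prod.snd (hiso (x, 0) (0, v))
  have h₃ := mul_add_mul_eq_shiftCoeff hcard (n := k + m / 2) (ε₁ := a / B) (ε₂ := 1)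
    fun y u => by
      simpa [sstar, zpstar, hN, hP, hS, hR, hW, hp.ne_zero, mul_assoc, add_comm]
        using congrArg Prod.snd (hiso (0, y) (u, 0))
  have h₄ := mul_add_mul_eq_shiftCoeff hcard (n := k) (ε₁ := B) (ε₂ := B) fun y v => by
    simpa [sstar, zpstar, hN, hP, hS, hR, hW, hp.ne_zero, mul_assoc, mul_add]
      using congrArg Prod.snd (hiso (0, y) (0, v))
  have hν : ν ≠ 0 ∨ ν' ≠ 0 := by
    by_contra! h0
    obtain ⟨⟨x, y⟩, hxy⟩ := N.surjective (0, 1)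
    simpa [h0, hN] using congrArg Prod.snd hxy
  exact false_of_shiftCoeff_blocks (σ := k) (h := (m / 2 : ℕ))
    ((ZMod.natCast_eq_zero_iff _ _).not.mpr (Nat.not_dvd_of_pos_of_lt hk1 (by omega)))
    (natCast_add_self_ne_zero hk1 (by omega) hodd)
    ((ZMod.natCast_eq_zero_iff _ _).not.mpr (Nat.not_dvd_of_pos_of_lt (by omega) (by omega)))
    (natCast_half_add_self hmeven) (natCast_add_self_add_half_ne_zero hmeven hodd)
    (div_ne_zero ha0 hB0) hB0 h₁ (by simpa only [Nat.cast_add] using h₂)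
    (by simpa only [Nat.cast_add] using h₃) h₄ hν

/-- The family-`S` pre-semifield `P_{q,B,a}` is not isotopic to the Zhou–Pott
pre-semifield with non-square parameter `α`: no triple `(N,L,K)` of additive
(= `𝔽_p`-linear) bijections of `M × M` satisfies
`N((x,y) ∗ (u,v)) = L(x,y) ⋆ K(u,v)` for all arguments. -/
theorem stmt_19 (p m k : ℕ) (hp : Nat.Prime p) (hp2 : p ≠ 2)
    (hm : 2 < m) (hmeven : Even m)
    (K : Type) [Field K] [Fintype K] (hcard : Fintype.card K = p ^ m)
    (hk1 : 1 ≤ k) (hk2 : k ≤ m - 1) (hodd : Odd (m / Nat.gcd k m))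
    (a B : K) (ha0 : a ≠ 0) (haQ : a ^ p ^ (m / 2) = a)
    (hB0 : B ≠ 0) (hB : ¬ ∃ c : K, c ^ 2 = B)
    (α : K) (hα0 : α ≠ 0) (hα : ¬ ∃ c : K, c ^ 2 = α) :
    ¬ ∃ N L K' : K × K ≃+ K × K, ∀ z w : K × K,
        N (sstar K (p ^ k) (p ^ (k + m / 2)) B (a / B) z w)
          = zpstar K (p ^ k) (p ^ (k + m / 2)) α (L z) (K' w) :=
  stmt_19_general p m k hp hmeven K hcard hk1 hk2 hodd a B ha0 hB0 α
end
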